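/- arXiv:math/0602191 — 10 statements merged into one kernel-verified Lean document; each statement's English description precedes it below -/
import Mathlib

section
/- Let G be a graph with n vertices and m edges that is obtained by pasting G1 and G2 on S, where G_i has n_i vertices and m_i edges (i = 1, 2), and S has n_S vertices and m_S edges. Let x, y, z be real numbers. If c(G1) ≤ x·n_1 + y·m_1 + z, c(G2) ≤ x·n_2 + y·m_2 + z, and c(S) ≥ x·n_S + y·m_S + z, then c(G) ≤ x·n + y·m + z. -/
/-- The number of cliques (sets of pairwise adjacent vertices, including the
empty clique) of a graph. -/
noncomputable def cliqueCount {V : Type*} (G : SimpleGraph V) : ℕ :=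
  Nat.card {s : Finset V // G.IsClique (s : Set V)}

open Classical in
/-- The clique count of an induced subgraph equals the number of cliques of the
ambient graph contained in the inducing set. -/
lemma cliqueCount_induce_eq {V : Type*} (G : SimpleGraph V) (A : Set V) :
    cliqueCount (G.induce A) =
      Nat.card {s : Finset V // G.IsClique (s : Set V) ∧ (s : Set V) ⊆ A} := by
  have key : ∀ t : {s : Finset A // (G.induce A).IsClique (s : Set A)},
      G.IsClique ((t.1.map ⟨Subtype.val, Subtype.val_injective⟩ : Finset V) : Set V) ∧
      ((t.1.map ⟨Subtype.val, Subtype.val_injective⟩ : Finset V) : Set V) ⊆ A := by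
    intro t
    constructor
    · intro a ha b hb hab
      simp only [Finset.coe_map, Set.mem_image, Finset.mem_coe,
        Function.Embedding.coeFn_mk] at ha hb
      obtain ⟨a', ha', rfl⟩ := ha
      obtain ⟨b', hb', rfl⟩ := hb
      have hne : a' ≠ b' := fun h => hab (by rw [h])
      exact t.2 ha' hb' hne
    · intro v hv
      simp only [Finset.coe_map, Set.mem_image, Finset.mem_coe,
        Function.Embedding.coeFn_mk] at hv
      obtain ⟨a', _, rfl⟩ := hv
      exact a'.2
  apply Nat.card_eq_of_bijective
    (fun t => ⟨t.1.map ⟨Subtype.val, Subtype.val_injective⟩, key t⟩)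
  constructor
  · rintro ⟨s, hs⟩ ⟨t, ht⟩ h
    simp only [Subtype.mk.injEq] at h ⊢
    exact Finset.map_injective _ h
  · rintro ⟨s, hs, hsA⟩
    have hmem : ∀ v ∈ s, v ∈ A := fun v hv => hsA hv
    refine ⟨⟨s.subtype (· ∈ A), ?_⟩, ?_⟩
    · intro a ha b hb hab
      simp only [Finset.mem_coe, Finset.mem_subtype] at ha hb
      have : G.Adj a.1 b.1 := hs ha hb (fun h => hab (Subtype.ext h))
      exact this
    · apply Subtype.ext
      simp only
      have heq : (Finset.map ⟨Subtype.val, Subtype.val_injective⟩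
          (s.subtype (· ∈ A)) : Finset V) =
          Finset.map (Function.Embedding.subtype (· ∈ A)) (s.subtype (· ∈ A)) := rfl
      rw [heq, Finset.subtype_map, Finset.filter_true_of_mem hmem]

/-- The edge count of an induced subgraph equals the number of edges of the
ambient graph with both endpoints in the inducing set. -/
lemma edgeCount_induce_eq {V : Type*} (G : SimpleGraph V) (A : Set V) :
    Nat.card (G.induce A).edgeSet =
      Nat.card {e : Sym2 V // e ∈ G.edgeSet ∧ ∀ v ∈ e, v ∈ A} := by
  have key : ∀ e : (G.induce A).edgeSet,
      Sym2.map Subtype.val e.1 ∈ G.edgeSet ∧ ∀ v ∈ Sym2.map Subtype.val e.1, v ∈ A := by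
    rintro ⟨e, he⟩
    induction e with
    | _ a b =>
      have hadj : G.Adj a.1 b.1 := he
      constructor
      · simpa [Sym2.map_pair_eq] using hadj
      · intro v hv
        simp only [Sym2.map_pair_eq, Sym2.mem_iff] at hv
        rcases hv with rfl | rfl
        · exact a.2
        · exact b.2
  apply Nat.card_eq_of_bijective (fun e => ⟨Sym2.map Subtype.val e.1, key e⟩)
  constructor
  · rintro ⟨e, he⟩ ⟨f, hf⟩ h
    simp only [Subtype.mk.injEq] at h ⊢
    exact Sym2.map.injective Subtype.val_injective h
  · rintro ⟨e, he, hA⟩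
    induction e with
    | _ u v =>
      have hu : u ∈ A := hA u (by simp)
      have hv : v ∈ A := hA v (by simp)
      have hadj : G.Adj u v := he
      refine ⟨⟨s(⟨u, hu⟩, ⟨v, hv⟩), hadj⟩, ?_⟩
      apply Subtype.ext
      simp [Sym2.map_pair_eq]

/-- If `G` is obtained by pasting the induced subgraphs `G₁ = G[A]` and
`G₂ = G[B]` on `S = G[A ∩ B]`, and `c(Gᵢ) ≤ x·nᵢ + y·mᵢ + z` while
`c(S) ≥ x·n_S + y·m_S + z`, then `c(G) ≤ x·n + y·m + z`. -/
theorem clique_count_pasting_bound {V : Type*} [Fintype V] (G : SimpleGraph V)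
    (A B : Set V) (hcover : A ∪ B = Set.univ)
    (hedges : ∀ u v, G.Adj u v → (u ∈ A ∧ v ∈ A) ∨ (u ∈ B ∧ v ∈ B))
    (x y z : ℝ)
    (h1 : (cliqueCount (G.induce A) : ℝ) ≤
      x * Nat.card A + y * Nat.card (G.induce A).edgeSet + z)
    (h2 : (cliqueCount (G.induce B) : ℝ) ≤
      x * Nat.card B + y * Nat.card (G.induce B).edgeSet + z)
    (hS : x * Nat.card ↥(A ∩ B) + y * Nat.card (G.induce (A ∩ B)).edgeSet + z ≤
      (cliqueCount (G.induce (A ∩ B)) : ℝ)) :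
    (cliqueCount G : ℝ) ≤ x * Fintype.card V + y * Nat.card G.edgeSet + z := by
  classical
  -- clique sets
  set CA : Set (Finset V) := {s | G.IsClique (s : Set V) ∧ (s : Set V) ⊆ A} with hCA
  set CB : Set (Finset V) := {s | G.IsClique (s : Set V) ∧ (s : Set V) ⊆ B} with hCB
  have hCunion : CA ∪ CB = {s : Finset V | G.IsClique (s : Set V)} := by
    ext s
    simp only [hCA, hCB, Set.mem_union, Set.mem_setOf_eq]
    constructor
    · rintro (⟨h, _⟩ | ⟨h, _⟩) <;> exact h
    · intro hs
      by_contra hcon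
      push_neg at hcon
      obtain ⟨h1', h2'⟩ := hcon
      obtain ⟨u, hu, huA⟩ : ∃ u ∈ (s : Set V), u ∉ A := by
        by_contra h; push_neg at h; exact (h1' hs) h
      obtain ⟨v, hv, hvB⟩ : ∃ v ∈ (s : Set V), v ∉ B := by
        by_contra h; push_neg at h; exact (h2' hs) h
      rcases eq_or_ne u v with rfl | hne
      · have : u ∈ A ∪ B := hcover ▸ Set.mem_univ u
        rcases this with h | h
        · exact huA h
        · exact hvB h
      · have hadj : G.Adj u v := hs hu hv hne
        rcases hedges u v hadj with ⟨hA', _⟩ | ⟨_, hB'⟩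
        · exact huA hA'
        · exact hvB hB'
  have hCinter : CA ∩ CB = {s : Finset V | G.IsClique (s : Set V) ∧ (s : Set V) ⊆ A ∩ B} := by
    ext s
    simp only [hCA, hCB, Set.mem_inter_iff, Set.mem_setOf_eq, Set.subset_inter_iff]
    tauto
  -- edge sets
  set EA : Set (Sym2 V) := {e | e ∈ G.edgeSet ∧ ∀ v ∈ e, v ∈ A} with hEA
  set EB : Set (Sym2 V) := {e | e ∈ G.edgeSet ∧ ∀ v ∈ e, v ∈ B} with hEB
  have hEunion : EA ∪ EB = G.edgeSet := by
    ext e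
    simp only [hEA, hEB, Set.mem_union, Set.mem_setOf_eq]
    constructor
    · rintro (⟨h, _⟩ | ⟨h, _⟩) <;> exact h
    · intro he
      induction e with
      | _ u v =>
        have hadj : G.Adj u v := he
        rcases hedges u v hadj with ⟨hu, hv⟩ | ⟨hu, hv⟩
        · left
          exact ⟨he, fun w hw => by
            rcases Sym2.mem_iff.mp hw with rfl | rfl <;> assumption⟩
        · right
          exact ⟨he, fun w hw => by
            rcases Sym2.mem_iff.mp hw with rfl | rfl <;> assumption⟩
  have hEinter : EA ∩ EB = {e : Sym2 V | e ∈ G.edgeSet ∧ ∀ v ∈ e, v ∈ A ∩ B} := by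
    ext e
    simp only [hEA, hEB, Set.mem_inter_iff, Set.mem_setOf_eq]
    constructor
    · rintro ⟨⟨he, hA'⟩, ⟨_, hB'⟩⟩
      exact ⟨he, fun v hv => ⟨hA' v hv, hB' v hv⟩⟩
    · rintro ⟨he, h⟩
      exact ⟨⟨he, fun v hv => (h v hv).1⟩, ⟨he, fun v hv => (h v hv).2⟩⟩
  -- counting identities for cliques
  have hc1 : cliqueCount (G.induce A) = CA.ncard := by
    rw [cliqueCount_induce_eq]; exact Nat.card_coe_set_eq CA
  have hc2 : cliqueCount (G.induce B) = CB.ncard := by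
    rw [cliqueCount_induce_eq]; exact Nat.card_coe_set_eq CB
  have hcS : cliqueCount (G.induce (A ∩ B)) = (CA ∩ CB).ncard := by
    rw [cliqueCount_induce_eq, hCinter]
    exact Nat.card_coe_set_eq _
  have hcG : cliqueCount G = {s : Finset V | G.IsClique (s : Set V)}.ncard :=
    Nat.card_coe_set_eq _
  have hclique_ie : cliqueCount G + cliqueCount (G.induce (A ∩ B)) =
      cliqueCount (G.induce A) + cliqueCount (G.induce B) := by
    rw [hc1, hc2, hcS, hcG, ← hCunion]
    exact Set.ncard_union_add_ncard_inter CA CB (Set.toFinite _) (Set.toFinite _)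
  -- counting identities for vertices
  have hv1 : (Nat.card A : ℕ) = A.ncard := Nat.card_coe_set_eq A
  have hv2 : (Nat.card B : ℕ) = B.ncard := Nat.card_coe_set_eq B
  have hvS : (Nat.card ↥(A ∩ B) : ℕ) = (A ∩ B).ncard := Nat.card_coe_set_eq _
  have hvert_ie : Fintype.card V + Nat.card ↥(A ∩ B) = Nat.card A + Nat.card B := by
    rw [hv1, hv2, hvS]
    have := Set.ncard_union_add_ncard_inter A B (Set.toFinite _) (Set.toFinite _)
    rw [hcover, Set.ncard_univ, Nat.card_eq_fintype_card] at this
    exact this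
  -- counting identities for edges
  have he1 : Nat.card (G.induce A).edgeSet = EA.ncard := by
    rw [edgeCount_induce_eq]; exact Nat.card_coe_set_eq EA
  have he2 : Nat.card (G.induce B).edgeSet = EB.ncard := by
    rw [edgeCount_induce_eq]; exact Nat.card_coe_set_eq EB
  have heS : Nat.card (G.induce (A ∩ B)).edgeSet = (EA ∩ EB).ncard := by
    rw [edgeCount_induce_eq, hEinter]
    exact Nat.card_coe_set_eq _
  have heG : Nat.card G.edgeSet = G.edgeSet.ncard := Nat.card_coe_set_eq _
  have hedge_ie : Nat.card G.edgeSet + Nat.card (G.induce (A ∩ B)).edgeSet =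
      Nat.card (G.induce A).edgeSet + Nat.card (G.induce B).edgeSet := by
    rw [he1, he2, heS, heG, ← hEunion]
    exact Set.ncard_union_add_ncard_inter EA EB (Set.toFinite _) (Set.toFinite _)
  -- combine
  have hclique' : (cliqueCount G : ℝ) + cliqueCount (G.induce (A ∩ B)) =
      cliqueCount (G.induce A) + cliqueCount (G.induce B) := by
    exact_mod_cast congrArg (Nat.cast : ℕ → ℝ) hclique_ie
  have hvert' : (Fintype.card V : ℝ) + Nat.card ↥(A ∩ B) =
      Nat.card A + Nat.card B := by
    exact_mod_cast congrArg (Nat.cast : ℕ → ℝ) hvert_ie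
  have hedge' : (Nat.card G.edgeSet : ℝ) + Nat.card (G.induce (A ∩ B)).edgeSet =
      Nat.card (G.induce A).edgeSet + Nat.card (G.induce B).edgeSet := by
    exact_mod_cast congrArg (Nat.cast : ℕ → ℝ) hedge_ie
  have ev : x * (Fintype.card V : ℝ) =
      x * Nat.card A + x * Nat.card B - x * Nat.card ↥(A ∩ B) := by
    linear_combination x * hvert'
  have ee : y * (Nat.card G.edgeSet : ℝ) =
      y * Nat.card (G.induce A).edgeSet + y * Nat.card (G.induce B).edgeSet -
        y * Nat.card (G.induce (A ∩ B)).edgeSet := by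
    linear_combination y * hedge'
  linarith [hclique', ev, ee, h1, h2, hS]
end

section
/- Let G be a graph with n vertices and m edges that is obtained by pasting G1 and G2 on a k-clique (an induced subgraph that is a complete graph on k vertices), where G_i has n_i vertices and m_i edges (i = 1, 2). Let x, y, z be real numbers. If c(G1) ≤ x·n_1 + y·m_1 + z, c(G2) ≤ x·n_2 + y·m_2 + z, and x·k + y·C(k,2) + z ≤ 2^k, then c(G) ≤ x·n + y·m + z. -/
open Finset

section Aux

variable {V : Type*} [Fintype V]

lemma cliqueCount_eq (G : SimpleGraph V)
    [DecidablePred fun s : Finset V => G.IsClique (s : Set V)] :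
    cliqueCount G = (univ.filter fun s : Finset V => G.IsClique (s : Set V)).card := by
  rw [cliqueCount, Nat.card_eq_fintype_card, Fintype.card_subtype]


lemma edgeCount_eq (G : SimpleGraph V)
    [DecidablePred fun s : Finset V => G.IsClique (s : Set V) ∧ s.card = 2] :
    Nat.card G.edgeSet
      = (univ.filter fun s : Finset V => G.IsClique (s : Set V) ∧ s.card = 2).card := by
  classical
  have hfin : G.edgeSet.Finite := Set.toFinite _
  rw [Nat.card_coe_set_eq, Set.ncard_eq_toFinset_card _ hfin]
  refine Finset.card_bij (fun e _ => Sym2.lift ⟨fun a b => ({a, b} : Finset V),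
      fun a b => Finset.pair_comm a b⟩ e) ?_ ?_ ?_
  · rintro e he
    induction e with
    | _ a b =>
      simp only [Set.Finite.mem_toFinset, SimpleGraph.mem_edgeSet] at he
      simp only [Sym2.lift_mk, mem_filter, mem_univ, true_and]
      constructor
      · simp only [coe_insert, coe_singleton]
        exact SimpleGraph.isClique_pair.2 fun _ => he
      · rw [card_insert_of_notMem (by simp [he.ne]), card_singleton]
  · rintro e₁ he₁ e₂ he₂ h
    induction e₁ with
    | _ a b =>
      induction e₂ with
      | _ c d =>
        simp only [Sym2.lift_mk] at h
        have ha : a ∈ ({c, d} : Finset V) := h ▸ (by simp)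
        have hb : b ∈ ({c, d} : Finset V) := h ▸ (by simp)
        simp only [mem_insert, mem_singleton] at ha hb
        simp only [Set.Finite.mem_toFinset, SimpleGraph.mem_edgeSet] at he₁ he₂
        rw [Sym2.eq_iff]
        rcases ha with rfl | rfl
        · left; refine ⟨rfl, ?_⟩
          rcases hb with rfl | rfl
          · exfalso; exact he₁.ne rfl
          · rfl
        · right; refine ⟨rfl, ?_⟩
          rcases hb with rfl | rfl
          · rfl
          · exfalso; exact he₁.ne rfl
  · rintro s hs
    simp only [mem_filter, mem_univ, true_and] at hs
    obtain ⟨hcl, hc2⟩ := hs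
    obtain ⟨a, b, hab, rfl⟩ := Finset.card_eq_two.1 hc2
    have hadj : G.Adj a b := by
      have := hcl (by simp : a ∈ (({a, b} : Finset V) : Set V))
        (by simp : b ∈ (({a, b} : Finset V) : Set V)) hab
      exact this
    exact ⟨s(a, b), by rw [Set.Finite.mem_toFinset]; exact hadj, by simp⟩

end Aux

section Aux2
variable {V : Type*} [Fintype V]

lemma induce_clique_iff (G : SimpleGraph V) (S : Set V) (s : Finset S) :
    (G.induce S).IsClique (s : Set S) ↔
      G.IsClique ((s.map (Function.Embedding.subtype _) : Finset V) : Set V) := by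
  rw [Finset.coe_map, Function.Embedding.coe_subtype]
  constructor
  · rintro h _ ⟨a, ha, rfl⟩ _ ⟨b, hb, rfl⟩ hne
    exact h ha hb (fun e => hne (congrArg _ e))
  · intro h a ha b hb hne
    exact h ⟨a, ha, rfl⟩ ⟨b, hb, rfl⟩ (fun e => hne (Subtype.ext e))

lemma card_filter_subtype (S : Set V) [Fintype S] (Q : Finset V → Prop)
    [DecidablePred fun s : Finset S => Q (s.map (Function.Embedding.subtype _))]
    [DecidablePred fun s : Finset V => Q s ∧ (s : Set V) ⊆ S] :
    (univ.filter fun s : Finset S => Q (s.map (Function.Embedding.subtype _))).card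
      = (univ.filter fun s : Finset V => Q s ∧ (s : Set V) ⊆ S).card := by
  classical
  refine Finset.card_bij (fun s _ => s.map (Function.Embedding.subtype _)) ?_ ?_ ?_
  · intro s hs
    simp only [mem_filter, mem_univ, true_and] at hs ⊢
    refine ⟨hs, ?_⟩
    intro v hv
    rw [Finset.coe_map, Function.Embedding.coe_subtype] at hv
    obtain ⟨a, _, rfl⟩ := hv
    exact a.2
  · intro s₁ _ s₂ _ h
    exact Finset.map_injective _ h
  · intro t ht
    simp only [mem_filter, mem_univ, true_and] at ht
    have hmap : (t.subtype (· ∈ S)).map (Function.Embedding.subtype _) = t := by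
      rw [Finset.subtype_map, Finset.filter_true_of_mem (fun x hx => ht.2 hx)]
    exact ⟨t.subtype (· ∈ S), by simp only [mem_filter, mem_univ, true_and, hmap]; exact ht.1,
      hmap⟩

lemma count_split (G : SimpleGraph V) (A B : Set V)
    (hcover : A ∪ B = Set.univ)
    (hedges : ∀ u v, G.Adj u v → (u ∈ A ∧ v ∈ A) ∨ (u ∈ B ∧ v ∈ B))
    (P : Finset V → Prop) [DecidablePred P]
    [DecidablePred fun s : Finset V => P s ∧ (s : Set V) ⊆ A]
    [DecidablePred fun s : Finset V => P s ∧ (s : Set V) ⊆ B]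
    [DecidablePred fun s : Finset V => P s ∧ (s : Set V) ⊆ A ∩ B]
    (hP : ∀ s, P s → G.IsClique (s : Set V)) :
    (univ.filter P).card + (univ.filter fun s => P s ∧ (s : Set V) ⊆ A ∩ B).card
      = (univ.filter fun s => P s ∧ (s : Set V) ⊆ A).card
        + (univ.filter fun s => P s ∧ (s : Set V) ⊆ B).card := by
  classical
  have hmem : ∀ v : V, v ∈ A ∪ B := fun v => hcover ▸ Set.mem_univ v
  have hunion : ((univ.filter fun s => P s ∧ (s : Set V) ⊆ A)
      ∪ (univ.filter fun s => P s ∧ (s : Set V) ⊆ B)) = univ.filter P := by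
    ext s
    simp only [mem_union, mem_filter, mem_univ, true_and]
    constructor
    · rintro (⟨h, _⟩ | ⟨h, _⟩) <;> exact h
    · intro h
      by_cases hA : (s : Set V) ⊆ A
      · exact Or.inl ⟨h, hA⟩
      · refine Or.inr ⟨h, ?_⟩
        obtain ⟨u, hu, huA⟩ := Set.not_subset.1 hA
        have huB : u ∈ B := (hmem u).resolve_left huA
        intro v hv
        by_cases hvB : v ∈ B
        · exact hvB
        · have hvA : v ∈ A := (hmem v).resolve_right hvB
          have hne : u ≠ v := fun e => huA (e ▸ hvA)
          have hadj := hP s h hu hv hne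
          exact ((hedges u v hadj).elim (fun h' => absurd h'.1 huA) (fun h' => h'.2))
  have hinter : ((univ.filter fun s => P s ∧ (s : Set V) ⊆ A)
      ∩ (univ.filter fun s => P s ∧ (s : Set V) ⊆ B))
        = univ.filter fun s => P s ∧ (s : Set V) ⊆ A ∩ B := by
    ext s
    simp only [mem_inter, mem_filter, mem_univ, true_and, Set.subset_inter_iff]
    tauto
  rw [← hunion, ← hinter, Finset.card_union_add_card_inter]

end Aux2

section Aux3
variable {V : Type*} [Fintype V]

lemma count_inter_pow (G : SimpleGraph V) (A B : Set V) (k : ℕ)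
    [DecidablePred fun s : Finset V => G.IsClique (s : Set V) ∧ (s : Set V) ⊆ A ∩ B]
    (hclique : G.IsClique (A ∩ B)) (hcard : Nat.card ↥(A ∩ B) = k) :
    (univ.filter fun s : Finset V =>
      G.IsClique (s : Set V) ∧ (s : Set V) ⊆ A ∩ B).card = 2 ^ k := by
  have hfin : (A ∩ B).Finite := Set.toFinite _
  have hT : hfin.toFinset.card = k := by
    rw [← Set.ncard_eq_toFinset_card _ hfin, ← Nat.card_coe_set_eq, hcard]
  have heq : (univ.filter fun s : Finset V =>
      G.IsClique (s : Set V) ∧ (s : Set V) ⊆ A ∩ B) = hfin.toFinset.powerset := by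
    ext s
    simp only [mem_filter, mem_univ, true_and, Finset.mem_powerset]
    constructor
    · intro ⟨_, hsub⟩
      intro v hv
      exact hfin.mem_toFinset.2 (hsub hv)
    · intro hsub
      have hsub' : (s : Set V) ⊆ A ∩ B := fun v hv => hfin.mem_toFinset.1 (hsub hv)
      exact ⟨hclique.subset hsub', hsub'⟩
  rw [heq, Finset.card_powerset, hT]

lemma count_inter_choose (G : SimpleGraph V) (A B : Set V) (k : ℕ)
    [DecidablePred fun s : Finset V => (G.IsClique (s : Set V) ∧ s.card = 2) ∧ (s : Set V) ⊆ A ∩ B]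
    (hclique : G.IsClique (A ∩ B)) (hcard : Nat.card ↥(A ∩ B) = k) :
    (univ.filter fun s : Finset V =>
      (G.IsClique (s : Set V) ∧ s.card = 2) ∧ (s : Set V) ⊆ A ∩ B).card = k.choose 2 := by
  have hfin : (A ∩ B).Finite := Set.toFinite _
  have hT : hfin.toFinset.card = k := by
    rw [← Set.ncard_eq_toFinset_card _ hfin, ← Nat.card_coe_set_eq, hcard]
  have heq : (univ.filter fun s : Finset V =>
      (G.IsClique (s : Set V) ∧ s.card = 2) ∧ (s : Set V) ⊆ A ∩ B)
        = Finset.powersetCard 2 hfin.toFinset := by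
    ext s
    simp only [mem_filter, mem_univ, true_and, Finset.mem_powersetCard]
    constructor
    · intro ⟨⟨_, hc⟩, hsub⟩
      exact ⟨fun v hv => hfin.mem_toFinset.2 (hsub hv), hc⟩
    · intro ⟨hsub, hc⟩
      have hsub' : (s : Set V) ⊆ A ∩ B := fun v hv => hfin.mem_toFinset.1 (hsub hv)
      exact ⟨⟨hclique.subset hsub', hc⟩, hsub'⟩
  rw [heq, Finset.card_powersetCard, hT]

end Aux3


section Main

/-- If `G` is obtained by pasting the induced subgraphs `G₁ = G[A]` and
`G₂ = G[B]` on a `k`-clique `A ∩ B`, with `c(Gᵢ) ≤ x·nᵢ + y·mᵢ + z` and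
`x·k + y·C(k,2) + z ≤ 2^k`, then `c(G) ≤ x·n + y·m + z`. -/
theorem clique_count_pasting_on_clique {V : Type*} [Fintype V]
    (G : SimpleGraph V) (A B : Set V) (k : ℕ)
    (hcover : A ∪ B = Set.univ)
    (hedges : ∀ u v, G.Adj u v → (u ∈ A ∧ v ∈ A) ∨ (u ∈ B ∧ v ∈ B))
    (hclique : G.IsClique (A ∩ B)) (hcard : Nat.card ↥(A ∩ B) = k)
    (x y z : ℝ)
    (h1 : (cliqueCount (G.induce A) : ℝ) ≤
      x * Nat.card A + y * Nat.card (G.induce A).edgeSet + z)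
    (h2 : (cliqueCount (G.induce B) : ℝ) ≤
      x * Nat.card B + y * Nat.card (G.induce B).edgeSet + z)
    (hk : x * k + y * (k.choose 2) + z ≤ 2 ^ k) :
    (cliqueCount G : ℝ) ≤ x * Fintype.card V + y * Nat.card G.edgeSet + z := by
  classical
  -- identify counts for induced subgraphs
  have hcA : ∀ S : Set V, cliqueCount (G.induce S)
      = (univ.filter fun s : Finset V => G.IsClique (s : Set V) ∧ (s : Set V) ⊆ S).card := by
    intro S
    rw [cliqueCount_eq, ← card_filter_subtype S (fun s => G.IsClique (s : Set V))]
    congr 1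
    exact Finset.filter_congr fun s _ => induce_clique_iff G S s
  have hmA : ∀ S : Set V, Nat.card (G.induce S).edgeSet
      = (univ.filter fun s : Finset V =>
          (G.IsClique (s : Set V) ∧ s.card = 2) ∧ (s : Set V) ⊆ S).card := by
    intro S
    rw [edgeCount_eq, ← card_filter_subtype S (fun s => G.IsClique (s : Set V) ∧ s.card = 2)]
    congr 1
    refine Finset.filter_congr fun s _ => ?_
    rw [induce_clique_iff G S s, Finset.card_map]
  -- clique count equation
  have ec : cliqueCount (G.induce A) + cliqueCount (G.induce B) = cliqueCount G + 2 ^ k := by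
    rw [hcA, hcA, cliqueCount_eq,
      ← count_split G A B hcover hedges (fun s => G.IsClique (s : Set V)) (fun _ h => h),
      count_inter_pow G A B k hclique hcard]
  -- edge count equation
  have em : Nat.card (G.induce A).edgeSet + Nat.card (G.induce B).edgeSet
      = Nat.card G.edgeSet + k.choose 2 := by
    rw [hmA, hmA, edgeCount_eq,
      ← count_split G A B hcover hedges
        (fun s => G.IsClique (s : Set V) ∧ s.card = 2) (fun _ h => h.1),
      count_inter_choose G A B k hclique hcard]
  -- vertex count equation
  have ev : Nat.card A + Nat.card B = Fintype.card V + k := by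
    rw [Nat.card_coe_set_eq, Nat.card_coe_set_eq,
      ← Set.ncard_union_add_ncard_inter A B (Set.toFinite _) (Set.toFinite _),
      hcover, ← hcard, Nat.card_coe_set_eq, Set.ncard_univ, Nat.card_eq_fintype_card]
  -- pass to ℝ
  have ecR : (cliqueCount (G.induce A) : ℝ) + cliqueCount (G.induce B)
      = cliqueCount G + 2 ^ k := by exact_mod_cast congrArg (Nat.cast : ℕ → ℝ) ec
  have emR : (Nat.card (G.induce A).edgeSet : ℝ) + Nat.card (G.induce B).edgeSet
      = Nat.card G.edgeSet + k.choose 2 := by exact_mod_cast congrArg (Nat.cast : ℕ → ℝ) em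
  have evR : (Nat.card A : ℝ) + Nat.card B = Fintype.card V + k := by
    exact_mod_cast congrArg (Nat.cast : ℕ → ℝ) ev
  have hx : x * (Nat.card A : ℝ) + x * (Nat.card B : ℝ)
      = x * (Fintype.card V : ℝ) + x * (k : ℝ) := by
    rw [← mul_add, ← mul_add, evR]
  have hy : y * (Nat.card (G.induce A).edgeSet : ℝ) + y * (Nat.card (G.induce B).edgeSet : ℝ)
      = y * (Nat.card G.edgeSet : ℝ) + y * ((k.choose 2 : ℕ) : ℝ) := by
    rw [← mul_add, ← mul_add, emR]
  linarith [h1, h2, hk, hx, hy, ecR]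

end Main
end

section
/- Let n and m be non-negative integers with m ≤ C(n,2), and let d ≥ 1 and 0 ≤ ℓ ≤ d − 1 be the unique integers such that m = C(d,2) + ℓ. Then every finite simple graph with n vertices and m edges has at most 2^d + 2^ℓ + n − d − 1 cliques. -/
/-!
Induction on the number of edges `m = C(d,2) + ℓ`. Let `v` be a vertex of minimum positive
degree `δ`. Summing degrees over `v` and its neighbours gives `δ(δ + 1) ≤ 2m`, whence `δ < d`.
Deleting the edges at `v` loses only cliques through `v`, of which there are at most `2^δ`,
and gains the clique `{v}`. The remaining `m - δ` edges decompose again as `C(d',2) + ℓ'`, and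
a short computation shows that the bound for `(d', ℓ')` is smaller by at least `2^δ - 1`.
-/

open Finset

namespace Nat

lemma two_pow_add_two_pow_le (a b : ℕ) : 2 ^ a + 2 ^ b ≤ 2 ^ (a + b) + 1 := by
  have := Nat.one_le_two_pow (n := a)
  have := Nat.one_le_two_pow (n := b)
  rw [pow_add]
  nlinarith

lemma lt_of_mul_succ_le_two_mul_choose_two_add {δ d ℓ : ℕ} (hℓ : ℓ < d)
    (h : δ * (δ + 1) ≤ 2 * (d.choose 2 + ℓ)) : δ < d := by
  by_contra! hdδ
  have hmono : (d + 1).choose 2 ≤ (δ + 1).choose 2 := Nat.choose_le_choose 2 (by omega)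
  have hδ : (δ + 1) * δ.choose 1 = (δ + 1).choose 2 * 2 := Nat.add_one_mul_choose_eq δ 1
  have hd : (d + 1).choose 2 = d.choose 2 + d := by simp [Nat.choose_succ_succ', add_comm]
  rw [Nat.choose_one_right] at hδ
  nlinarith

/-- Splitting `δ` edges off `C(d,2) + ℓ` edges, the quantity `2^d + 2^ℓ - d` drops by at least
`2^δ - 1`. -/
lemma exists_choose_two_add_eq_add {d ℓ δ : ℕ} (hℓ : ℓ < d) (hδ : 0 < δ) (hδd : δ < d) :
    ∃ d' ℓ', ℓ' < d' ∧ d.choose 2 + ℓ = d'.choose 2 + ℓ' + δ ∧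
      2 ^ d' + 2 ^ ℓ' + 2 ^ δ + d ≤ 2 ^ d + 2 ^ ℓ + d' + 1 := by
  rcases le_or_gt δ ℓ with hδℓ | hℓδ
  · refine ⟨d, ℓ - δ, by omega, by omega, ?_⟩
    have := two_pow_add_two_pow_le (ℓ - δ) δ
    rw [Nat.sub_add_cancel hδℓ] at this
    omega
  · obtain ⟨a, rfl⟩ : ∃ a, d = δ + a + 1 := ⟨d - δ - 1, by omega⟩
    refine ⟨δ + a, ℓ + a, by omega, by simp [Nat.choose_succ_succ']; omega, ?_⟩
    have h₁ : 2 ^ ℓ ≤ 2 ^ δ := Nat.pow_le_pow_right (by norm_num) hℓδ.le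
    have h₂ : 1 ≤ 2 ^ a := Nat.one_le_two_pow
    have key : 2 ^ (ℓ + a) + 2 ^ δ ≤ 2 ^ (δ + a) + 2 ^ ℓ := by
      rw [pow_add, pow_add]
      nlinarith
    rw [pow_succ]
    omega

end Nat

namespace SimpleGraph

variable {V : Type*} [Fintype V] (G : SimpleGraph V) [DecidableRel G.Adj]

lemma exists_degree_pos_le_degree_of_adj (hG : G ≠ ⊥) :
    ∃ v, 0 < G.degree v ∧ ∀ w, G.Adj v w → G.degree v ≤ G.degree w := by
  obtain ⟨a, b, hab⟩ := ne_bot_iff_exists_adj.1 hG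
  have hne : ({u | 0 < G.degree u} : Finset V).Nonempty :=
    ⟨a, by simpa [degree_pos_iff_exists_adj] using ⟨b, hab⟩⟩
  obtain ⟨v, hv, hmin⟩ := exists_min_image _ (fun u => G.degree u) hne
  refine ⟨v, (mem_filter.1 hv).2, fun w hvw => hmin w ?_⟩
  simpa [degree_pos_iff_exists_adj] using ⟨v, hvw.symm⟩

variable [DecidableEq V]

lemma cliqueCount_eq_card_filter :
    cliqueCount G = #{s : Finset V | G.IsClique (s : Set V)} := by
  rw [cliqueCount, Nat.card_eq_fintype_card, ← Fintype.card_subtype]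

lemma cliqueCount_bot_le : cliqueCount (⊥ : SimpleGraph V) ≤ Fintype.card V + 1 := by
  rw [cliqueCount_eq_card_filter]
  calc #{s : Finset V | (⊥ : SimpleGraph V).IsClique (s : Set V)}
      ≤ #(insert ∅ (univ.image fun v : V => ({v} : Finset V))) := by
        refine card_le_card fun s hs => ?_
        simp only [mem_filter, mem_univ, true_and, isClique_bot_iff] at hs
        rcases hs.eq_empty_or_singleton with h | ⟨v, h⟩
        · simp [Finset.coe_eq_empty.mp h]
        · simp [Finset.coe_eq_singleton.mp h]
    _ ≤ #(univ.image fun v : V => ({v} : Finset V)) + 1 := card_insert_le _ _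
    _ ≤ Fintype.card V + 1 := by grw [card_image_le, card_univ]

lemma card_filter_isClique_mem_le (v : V) :
    #{s : Finset V | G.IsClique (s : Set V) ∧ v ∈ s} ≤ 2 ^ G.degree v := by
  calc #{s : Finset V | G.IsClique (s : Set V) ∧ v ∈ s}
      ≤ #((G.neighborFinset v).powerset.image (insert v)) := by
        refine card_le_card fun s hs => ?_
        simp only [mem_filter, mem_univ, true_and] at hs
        refine mem_image.2 ⟨s.erase v, mem_powerset.2 fun w hw => ?_, insert_erase hs.2⟩
        rw [mem_erase] at hw
        exact (G.mem_neighborFinset v w).2 (hs.1 hs.2 hw.2 hw.1.symm)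
    _ ≤ 2 ^ G.degree v := by
        grw [card_image_le, card_powerset, card_neighborFinset_eq_degree]

lemma card_filter_isClique_notMem_lt (v : V) :
    #{s : Finset V | G.IsClique (s : Set V) ∧ v ∉ s} < cliqueCount (G.deleteIncidenceSet v) := by
  rw [cliqueCount_eq_card_filter]
  have hsub : ({s : Finset V | G.IsClique (s : Set V) ∧ v ∉ s} : Finset _) ⊆
      ({s : Finset V | (G.deleteIncidenceSet v).IsClique (s : Set V)} : Finset _) := by
    intro s hs
    simp only [mem_filter, mem_univ, true_and] at hs ⊢
    intro a ha b hb hab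
    exact deleteIncidenceSet_adj.2
      ⟨hs.1 ha hb hab, ne_of_mem_of_not_mem ha hs.2, ne_of_mem_of_not_mem hb hs.2⟩
  refine card_lt_card ((ssubset_iff_of_subset hsub).2 ⟨{v}, ?_, ?_⟩) <;> simp

/-- Deleting the edges at `v` loses at most the `2 ^ deg v` cliques through `v` and gains `{v}`. -/
lemma cliqueCount_add_one_le_deleteIncidenceSet (v : V) :
    cliqueCount G + 1 ≤ cliqueCount (G.deleteIncidenceSet v) + 2 ^ G.degree v := by
  have hsplit := card_filter_add_card_filter_not (s := {s : Finset V | G.IsClique (s : Set V)})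
    (fun s => v ∈ s)
  simp only [filter_filter] at hsplit
  have := G.card_filter_isClique_mem_le v
  have := G.card_filter_isClique_notMem_lt v
  rw [cliqueCount_eq_card_filter]
  omega

lemma degree_mul_succ_le {v : V} (hv : ∀ w, G.Adj v w → G.degree v ≤ G.degree w) :
    G.degree v * (G.degree v + 1) ≤ 2 * #G.edgeFinset := by
  calc G.degree v * (G.degree v + 1)
      = ∑ _w ∈ insert v (G.neighborFinset v), G.degree v := by
        rw [sum_const, card_insert_of_notMem (G.notMem_neighborFinset_self v),
          card_neighborFinset_eq_degree, smul_eq_mul, mul_comm]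
    _ ≤ ∑ w ∈ insert v (G.neighborFinset v), G.degree w := by
        refine sum_le_sum fun w hw => ?_
        rcases mem_insert.1 hw with rfl | hw
        · rfl
        · exact hv w ((G.mem_neighborFinset v w).1 hw)
    _ ≤ ∑ w, G.degree w := sum_le_sum_of_subset (subset_univ _)
    _ = 2 * #G.edgeFinset := G.sum_degrees_eq_twice_card_edges

theorem cliqueCount_add_le {d ℓ : ℕ} (hℓ : ℓ < d) (hm : #G.edgeFinset = d.choose 2 + ℓ) :
    cliqueCount G + d + 1 ≤ 2 ^ d + 2 ^ ℓ + Fintype.card V := by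
  induction hE : #G.edgeFinset using Nat.strong_induction_on generalizing G d ℓ with
  | _ m IH =>
  rcases eq_or_ne G ⊥ with hG | hG
  · obtain rfl : m = 0 := by rw [← hE, edgeFinset_eq_empty.2 hG, card_empty]
    subst hG
    obtain rfl : ℓ = 0 := by omega
    obtain rfl : d = 1 := by
      have := Nat.choose_eq_zero_iff.1 (show d.choose 2 = 0 by omega)
      omega
    rw [pow_one, pow_zero]
    have := cliqueCount_bot_le (V := V)
    omega
  · obtain ⟨v, hδ, hmin⟩ := G.exists_degree_pos_le_degree_of_adj hG
    have hδd : G.degree v < d :=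
      Nat.lt_of_mul_succ_le_two_mul_choose_two_add hℓ (hm ▸ G.degree_mul_succ_le hmin)
    obtain ⟨d', ℓ', hℓ', hsplit, hpow⟩ := Nat.exists_choose_two_add_eq_add hℓ hδ hδd
    have hG' := IH (m - G.degree v) (by omega) (G.deleteIncidenceSet v) hℓ'
      (by rw [card_edgeFinset_deleteIncidenceSet]; omega)
      (by rw [card_edgeFinset_deleteIncidenceSet, hE])
    have := G.cliqueCount_add_one_le_deleteIncidenceSet v
    omega

end SimpleGraph

theorem clique_count_upper_bound_general {V : Type*} [Fintype V] (G : SimpleGraph V)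
    (n m d ℓ : ℕ) (hn : Fintype.card V = n) (hm : Nat.card G.edgeSet = m)
    (hd : 1 ≤ d) (hℓ : ℓ ≤ d - 1)
    (hdecomp : m = d.choose 2 + ℓ) :
    (cliqueCount G : ℤ) ≤ 2 ^ d + 2 ^ ℓ + n - d - 1 := by
  classical
  have hE : #G.edgeFinset = d.choose 2 + ℓ := by
    rw [← hdecomp, ← hm, Nat.card_eq_fintype_card, SimpleGraph.edgeFinset_card]
  have h : (cliqueCount G + d + 1 : ℤ) ≤ 2 ^ d + 2 ^ ℓ + n := by
    exact_mod_cast hn ▸ G.cliqueCount_add_le (by omega) hE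
  linarith

/-- Every graph with `n` vertices and `m = C(d,2) + ℓ` edges (where `d ≥ 1`,
`0 ≤ ℓ ≤ d - 1`, `m ≤ C(n,2)`) has at most `2^d + 2^ℓ + n - d - 1` cliques. -/
theorem clique_count_upper_bound {V : Type*} [Fintype V] (G : SimpleGraph V)
    (n m d ℓ : ℕ) (hn : Fintype.card V = n) (hm : Nat.card G.edgeSet = m)
    (hmn : m ≤ n.choose 2) (hd : 1 ≤ d) (hℓ : ℓ ≤ d - 1)
    (hdecomp : m = d.choose 2 + ℓ) :
    (cliqueCount G : ℤ) ≤ 2 ^ d + 2 ^ ℓ + n - d - 1 :=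
  clique_count_upper_bound_general G n m d ℓ hn hm hd hℓ hdecomp
end

section
/- Let n and m be non-negative integers with m ≤ C(n,2), and let d ≥ 1 and 0 ≤ ℓ ≤ d − 1 be the unique integers such that m = C(d,2) + ℓ. Then there exists a finite simple graph with n vertices and m edges having exactly 2^d + 2^ℓ + n − d − 1 cliques. -/
/-!
The witness is the colex graph with `m` edges: `K_d`, one more vertex joined to `ℓ` of its
vertices, and isolated vertices. Order the vertices; a nonempty clique is its largest vertex `v`
together with a clique in the lower neighbourhood `N⁻(v)`. In the colex graph every `N⁻(v)` is a
clique, so `c(G) = 1 + ∑ᵥ 2^|N⁻(v)|`, while always `|E(G)| = ∑ᵥ |N⁻(v)|`. If `d ≥ n`, the bound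
`m ≤ C(n,2)` forces `G` to be complete.
-/

open Finset

theorem Nat.eq_or_eq_zero_of_choose_two_add_le {n d ℓ : ℕ} (hnd : n ≤ d)
    (h : d.choose 2 + ℓ ≤ n.choose 2) : ℓ = 0 ∧ (d = n ∨ n = 0 ∧ d ≤ 1) := by
  rcases hnd.eq_or_lt with rfl | hlt
  · omega
  have hsucc : (n + 1).choose 2 = n.choose 2 + n := by
    rw [Nat.choose_succ_succ, Nat.choose_one_right, add_comm]
  have := Nat.choose_le_choose 2 (show n + 1 ≤ d from hlt)
  obtain rfl : n = 0 := by omega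
  simp only [Nat.choose_zero_succ, nonpos_iff_eq_zero, Nat.add_eq_zero_iff,
    Nat.choose_eq_zero_iff] at h
  omega

namespace SimpleGraph

variable {V : Type*} [Fintype V]

theorem cliqueCount_top [DecidableEq V] :
    cliqueCount (⊤ : SimpleGraph V) = 2 ^ Fintype.card V := by
  rw [cliqueCount,
    Nat.card_congr (Equiv.subtypeUnivEquiv fun s : Finset V => IsClique.top (s := (s : Set V))),
    Nat.card_eq_fintype_card, Fintype.card_finset]

theorem cliqueCount_eq_card_filter_nonempty_add_one (G : SimpleGraph V) [DecidableEq V]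
    [DecidablePred fun s : Finset V => G.IsClique (s : Set V)] :
    cliqueCount G = #{s : Finset V | G.IsClique (s : Set V) ∧ s.Nonempty} + 1 := by
  have hsplit : filter (fun s : Finset V => G.IsClique (s : Set V)) univ =
      insert ∅ (filter (fun s : Finset V => G.IsClique (s : Set V) ∧ s.Nonempty) univ) := by
    ext s
    rcases s.eq_empty_or_nonempty with rfl | hs
    · simp
    · simp [hs, hs.ne_empty]
  rw [cliqueCount, Nat.card_eq_fintype_card, Fintype.card_subtype, hsplit,
    card_insert_of_notMem (by simp)]

variable [LinearOrder V] (G : SimpleGraph V) [DecidableRel G.Adj]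

def lowerNeighborFinset (v : V) : Finset V := {u | G.Adj v u ∧ u < v}

variable {G}

theorem mem_lowerNeighborFinset {u v : V} :
    u ∈ G.lowerNeighborFinset v ↔ G.Adj v u ∧ u < v := by
  simp [lowerNeighborFinset]

theorem eq_and_eq_of_insert_eq_insert {v v' : V} {t t' : Finset V}
    (ht : t ⊆ G.lowerNeighborFinset v) (ht' : t' ⊆ G.lowerNeighborFinset v')
    (h : insert v t = insert v' t') : v = v' ∧ t = t' := by
  have hlt {w s} (hs : s ⊆ G.lowerNeighborFinset w) {u} (hu : u ∈ s) : u < w :=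
    (mem_lowerNeighborFinset.1 (hs hu)).2
  obtain rfl : v = v' := by
    rcases mem_insert.1 (h ▸ mem_insert_self v t) with hv | hv
    · exact hv
    rcases mem_insert.1 (h.symm ▸ mem_insert_self v' t') with hv' | hv'
    · exact hv'.symm
    · exact absurd (hlt ht' hv) (hlt ht hv').not_gt
  refine ⟨rfl, ?_⟩
  rw [← erase_insert (fun hv => lt_irrefl v (hlt ht hv)),
    ← erase_insert (fun hv => lt_irrefl v (hlt ht' hv)), h]

variable (G)

theorem card_edgeFinset_eq_sum_card_lowerNeighborFinset :
    #G.edgeFinset = ∑ v, #(G.lowerNeighborFinset v) := by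
  rw [← card_sigma]
  symm
  refine card_bij (fun p _ => s(p.1, p.2)) ?_ ?_ ?_
  · rintro ⟨v, u⟩ h
    simpa [mem_lowerNeighborFinset] using (mem_lowerNeighborFinset.1 (mem_sigma.1 h).2).1
  · rintro ⟨v, u⟩ h ⟨v', u'⟩ h' e
    simp only [mem_sigma, mem_univ, true_and, mem_lowerNeighborFinset] at h h'
    rcases Sym2.eq_iff.1 e with ⟨rfl, rfl⟩ | ⟨rfl, rfl⟩
    · rfl
    · exact absurd h.2 h'.2.not_gt
  · intro e he
    induction e using Sym2.ind with | _ a b => ?_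
    have hab : G.Adj a b := by simpa using he
    rcases hab.ne.lt_or_gt with h | h
    · exact ⟨⟨b, a⟩, by simp [mem_lowerNeighborFinset, hab.symm, h], Sym2.eq_swap⟩
    · exact ⟨⟨a, b⟩, by simp [mem_lowerNeighborFinset, hab, h], rfl⟩

theorem cliqueCount_eq_one_add_sum_two_pow
    (h : ∀ v, G.IsClique (G.lowerNeighborFinset v : Set V)) :
    cliqueCount G = 1 + ∑ v, 2 ^ #(G.lowerNeighborFinset v) := by
  classical
  simp_rw [← card_powerset, ← card_sigma]
  rw [cliqueCount_eq_card_filter_nonempty_add_one, add_comm]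
  congr 1
  symm
  refine card_bij (fun p _ => insert p.1 p.2) ?_ ?_ ?_
  · rintro ⟨v, t⟩ ht
    simp only [mem_sigma, mem_univ, true_and, mem_powerset] at ht
    refine mem_filter.2 ⟨mem_univ _, ?_, insert_nonempty _ _⟩
    rw [coe_insert, isClique_insert]
    exact ⟨(h v).subset (coe_subset.2 ht), fun u hu _ => (mem_lowerNeighborFinset.1 (ht hu)).1⟩
  · rintro ⟨v, t⟩ ht ⟨v', t'⟩ ht' e
    simp only [mem_sigma, mem_univ, true_and, mem_powerset] at ht ht'
    obtain ⟨rfl, rfl⟩ := eq_and_eq_of_insert_eq_insert ht ht' e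
    rfl
  · intro s hs
    simp only [mem_filter, mem_univ, true_and] at hs
    obtain ⟨hclique, hne⟩ := hs
    refine ⟨⟨s.max' hne, s.erase (s.max' hne)⟩, ?_, insert_erase (max'_mem s hne)⟩
    simp only [mem_sigma, mem_univ, true_and, mem_powerset]
    intro u hu
    obtain ⟨hne', hu⟩ := mem_erase.1 hu
    exact mem_lowerNeighborFinset.2 ⟨hclique (max'_mem s hne) hu hne'.symm,
      lt_of_le_of_ne (le_max' s u hu) hne'⟩

/-- The edges are the first `C(d,2) + ℓ` pairs `u < v` in colexicographic order (by `v`, then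
by `u`): a clique on `{0, …, d-1}` and the edges from `d` to `0, …, ℓ-1`. -/
def colexGraph (n d ℓ : ℕ) : SimpleGraph (Fin n) :=
  fromRel fun u v => u < v ∧ ((v : ℕ) < d ∨ (v : ℕ) = d ∧ (u : ℕ) < ℓ)

instance (n d ℓ : ℕ) : DecidableRel (colexGraph n d ℓ).Adj :=
  fun u v => inferInstanceAs (Decidable (u ≠ v ∧ (_ ∨ _)))

def colexLowerDegree (d ℓ i : ℕ) : ℕ := if i < d then i else if i = d then ℓ else 0

variable {n d ℓ : ℕ}

theorem colexGraph_adj_of_lt {u v : Fin n} (hu : (u : ℕ) < d) (hv : (v : ℕ) < d) (huv : u ≠ v) :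
    (colexGraph n d ℓ).Adj u v := by
  simp only [colexGraph, fromRel_adj, Fin.lt_def]
  exact ⟨huv, by omega⟩

theorem lowerNeighborFinset_colexGraph (hℓ : ℓ ≤ d) (v : Fin n) :
    (colexGraph n d ℓ).lowerNeighborFinset v =
      univ.filter fun u : Fin n => (u : ℕ) < colexLowerDegree d ℓ v := by
  ext u
  rw [mem_lowerNeighborFinset, mem_filter_univ]
  simp only [colexGraph, fromRel_adj, colexLowerDegree, ne_eq, Fin.lt_def, Fin.ext_iff]
  split_ifs <;> omega

theorem card_lowerNeighborFinset_colexGraph (hℓ : ℓ ≤ d) (v : Fin n) :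
    #((colexGraph n d ℓ).lowerNeighborFinset v) = colexLowerDegree d ℓ v := by
  rw [lowerNeighborFinset_colexGraph hℓ, Fin.card_filter_val_lt, min_eq_right]
  unfold colexLowerDegree
  split_ifs <;> omega

theorem isClique_lowerNeighborFinset_colexGraph (hℓ : ℓ ≤ d) (v : Fin n) :
    (colexGraph n d ℓ).IsClique ((colexGraph n d ℓ).lowerNeighborFinset v : Set (Fin n)) := by
  have hlt : ∀ u ∈ (colexGraph n d ℓ).lowerNeighborFinset v, (u : ℕ) < d := by
    intro u hu
    rw [lowerNeighborFinset_colexGraph hℓ, mem_filter] at hu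
    unfold colexLowerDegree at hu
    split_ifs at hu <;> omega
  exact fun u hu w hw => colexGraph_adj_of_lt (hlt u hu) (hlt w hw)

theorem sum_range_colexLowerDegree (f : ℕ → ℕ) (hdn : d < n) :
    ∑ i ∈ range n, f (colexLowerDegree d ℓ i) =
      ∑ i ∈ range d, f i + f ℓ + (n - d - 1) * f 0 := by
  obtain ⟨k, rfl⟩ : ∃ k, n = d + 1 + k := ⟨n - d - 1, by omega⟩
  rw [sum_range_add, sum_range_succ]
  congr 2
  · exact sum_congr rfl fun i hi => by rw [colexLowerDegree, if_pos (mem_range.1 hi)]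
  · simp [colexLowerDegree]
  · rw [sum_congr rfl fun i _ => by rw [colexLowerDegree, if_neg (by omega), if_neg (by omega)],
      sum_const, card_range, smul_eq_mul, show d + 1 + k - d - 1 = k by omega]

theorem card_edgeSet_colexGraph (hℓ : ℓ ≤ d) (hdn : d < n) :
    Nat.card (colexGraph n d ℓ).edgeSet = d.choose 2 + ℓ := by
  rw [Nat.card_eq_fintype_card, ← edgeFinset_card,
    card_edgeFinset_eq_sum_card_lowerNeighborFinset]
  simp_rw [card_lowerNeighborFinset_colexGraph hℓ]
  rw [Fin.sum_univ_eq_sum_range (colexLowerDegree d ℓ)]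
  simpa [sum_range_id, Nat.choose_two_right] using sum_range_colexLowerDegree (ℓ := ℓ) id hdn

theorem cliqueCount_colexGraph (hℓ : ℓ ≤ d) (hdn : d < n) :
    cliqueCount (colexGraph n d ℓ) = 2 ^ d + 2 ^ ℓ + (n - d - 1) := by
  rw [cliqueCount_eq_one_add_sum_two_pow _ (isClique_lowerNeighborFinset_colexGraph hℓ)]
  simp_rw [card_lowerNeighborFinset_colexGraph hℓ]
  rw [Fin.sum_univ_eq_sum_range (2 ^ colexLowerDegree d ℓ ·),
    sum_range_colexLowerDegree (2 ^ ·) hdn, Nat.geomSum_eq le_rfl]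
  have := Nat.one_le_two_pow (n := d)
  simp only [pow_zero, mul_one, Nat.add_one_sub_one, Nat.div_one]
  omega

end SimpleGraph

open SimpleGraph

theorem clique_count_lower_bound_exists_general (n m d ℓ : ℕ)
    (hmn : m ≤ n.choose 2) (hℓ : ℓ ≤ d - 1)
    (hdecomp : m = d.choose 2 + ℓ) :
    ∃ G : SimpleGraph (Fin n), Nat.card G.edgeSet = m ∧
      (cliqueCount G : ℤ) = 2 ^ d + 2 ^ ℓ + n - d - 1 := by
  subst hdecomp
  rcases lt_or_ge d n with hdn | hnd
  · refine ⟨colexGraph n d ℓ, card_edgeSet_colexGraph (by omega) hdn, ?_⟩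
    rw [cliqueCount_colexGraph (by omega) hdn]
    push_cast [Nat.sub_sub, Nat.cast_sub (show d + 1 ≤ n by omega)]
    ring
  · obtain ⟨rfl, hdn⟩ := Nat.eq_or_eq_zero_of_choose_two_add_le hnd hmn
    refine ⟨⊤, ?_, ?_⟩
    · rw [Nat.card_eq_fintype_card, ← edgeFinset_card, card_edgeFinset_top_eq_card_choose_two,
        Fintype.card_fin]
      rcases hdn with rfl | ⟨rfl, hd⟩
      · simp
      · interval_cases d <;> rfl
    · rw [cliqueCount_top, Fintype.card_fin]
      rcases hdn with rfl | ⟨rfl, hd⟩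
      · push_cast; ring
      · interval_cases d <;> norm_num

/-- For all `n`, `m = C(d,2) + ℓ` with `m ≤ C(n,2)`, `d ≥ 1`, `0 ≤ ℓ ≤ d - 1`,
there is a graph with `n` vertices, `m` edges and exactly
`2^d + 2^ℓ + n - d - 1` cliques. -/
theorem clique_count_lower_bound_exists (n m d ℓ : ℕ)
    (hmn : m ≤ n.choose 2) (hd : 1 ≤ d) (hℓ : ℓ ≤ d - 1)
    (hdecomp : m = d.choose 2 + ℓ) :
    ∃ G : SimpleGraph (Fin n), Nat.card G.edgeSet = m ∧
      (cliqueCount G : ℤ) = 2 ^ d + 2 ^ ℓ + n - d - 1 :=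
  clique_count_lower_bound_exists_general n m d ℓ hmn hℓ hdecomp
end

section
/- Let G be a finite simple graph with n vertices, m edges, and maximum degree at most Δ, where Δ ≥ 1. Then c(G) ≤ 1 + n + ((2^{Δ+1} − Δ − 2)/C(Δ+1,2))·m; equivalently, C(Δ+1,2)·(c(G) − 1 − n) ≤ (2^{Δ+1} − Δ − 2)·m. -/
open Finset


-- key nat identity
lemma key_nat (d j : ℕ) :
    (j+2)*(j+1)*((d+2).choose (j+2)) = (d+2)*(d+1)*(d.choose j) := by
  have h1 := Nat.add_one_mul_choose_eq d j
  have h2 := Nat.add_one_mul_choose_eq (d+1) (j+1)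
  calc (j+2)*(j+1)*((d+2).choose (j+2)) = (j+1) * ((d+2).choose (j+2) * (j+2)) := by ring
    _ = (j+1) * ((d+2) * ((d+1).choose (j+1))) := by rw [← h2]
    _ = (d+2) * ((d+1).choose (j+1) * (j+1)) := by ring
    _ = (d+2) * ((d+1) * d.choose j) := by rw [← h1]
    _ = (d+2)*(d+1)*(d.choose j) := by ring

lemma sum_choose_tail (d : ℕ) :
    (∑ j ∈ range (d+1), (d+2).choose (j+2)) + (d+3) = 2^(d+2) := by
  have h := Nat.sum_range_choose (d+2)
  rw [Finset.sum_range_succ', Finset.sum_range_succ'] at h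
  simp only [Nat.choose_one_right, add_assoc] at h
  norm_num at h
  omega

lemma sum_id (d : ℕ) :
    ∑ j ∈ range (d+1), (d.choose j : ℝ) * (((j:ℝ)+2)*((j:ℝ)+1))⁻¹
      = (2^(d+2) - (d:ℝ) - 3)/(((d:ℝ)+2)*((d:ℝ)+1)) := by
  have hterm : ∀ j ∈ range (d+1), (d.choose j : ℝ) * (((j:ℝ)+2)*((j:ℝ)+1))⁻¹
      = ((d+2).choose (j+2) : ℝ) / (((d:ℝ)+2)*((d:ℝ)+1)) := by
    intro j _
    have h := key_nat d j
    have h' : ((j:ℝ)+2)*((j:ℝ)+1)*((d+2).choose (j+2) : ℝ)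
        = ((d:ℝ)+2)*((d:ℝ)+1)*(d.choose j : ℝ) := by exact_mod_cast congrArg (Nat.cast (R := ℝ)) h
    have hj : ((j:ℝ)+2)*((j:ℝ)+1) ≠ 0 := by positivity
    have hd : ((d:ℝ)+2)*((d:ℝ)+1) ≠ 0 := by positivity
    field_simp
    linarith [h']
  rw [Finset.sum_congr rfl hterm, ← Finset.sum_div]
  congr 1
  have h := sum_choose_tail d
  have : ((∑ j ∈ range (d+1), (d+2).choose (j+2) : ℕ) : ℝ) + ((d:ℝ)+3) = 2^(d+2) := by
    exact_mod_cast congrArg (Nat.cast (R := ℝ)) h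
  push_cast at this ⊢
  linarith


lemma inner_bound {V : Type*} [Fintype V] [DecidableEq V] (G : SimpleGraph V)
    [DecidableRel G.Adj] (d : ℕ) (hdeg : ∀ v, G.degree v ≤ d + 1) {u v : V}
    (huv : G.Adj u v) :
    ∑ K ∈ ((univ.filter (fun s : Finset V => G.IsClique (s:Set V) ∧ 2 ≤ s.card)).filter
        (fun K => u ∈ K ∧ v ∈ K)), (((K.card : ℝ) * ((K.card:ℝ)-1))⁻¹)
      ≤ (2^(d+2) - (d:ℝ) - 3)/(((d:ℝ)+2)*((d:ℝ)+1)) := by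
  classical
  set A := ((univ.filter (fun s : Finset V => G.IsClique (s:Set V) ∧ 2 ≤ s.card)).filter
        (fun K => u ∈ K ∧ v ∈ K)) with hA
  have hmemA : ∀ K ∈ A, G.IsClique (K:Set V) ∧ 2 ≤ K.card ∧ u ∈ K ∧ v ∈ K := by
    intro K hK
    simp only [hA, mem_filter, mem_univ, true_and] at hK
    tauto
  have hne : u ≠ v := huv.ne
  set W := G.neighborFinset u ∩ G.neighborFinset v with hW
  -- W.card ≤ d
  have hWcard : W.card ≤ d := by
    have hsub : W ⊆ (G.neighborFinset u).erase v := by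
      intro x hx
      simp only [hW, mem_inter] at hx
      rw [mem_erase]
      refine ⟨?_, hx.1⟩
      rintro rfl
      have h2 := hx.2; rw [G.mem_neighborFinset] at h2; exact G.irrefl h2
    have h1 := Finset.card_le_card hsub
    rw [Finset.card_erase_of_mem (by rwa [G.mem_neighborFinset])] at h1
    have := hdeg u
    rw [← G.card_neighborFinset_eq_degree] at this
    omega
  -- subset card relation
  have hcard2 : ∀ K ∈ A, (K \ {u, v}).card = K.card - 2 := by
    intro K hK
    obtain ⟨_, _, hu, hv⟩ := hmemA K hK
    rw [Finset.card_sdiff_of_subset (by intro x hx; simp at hx; rcases hx with rfl|rfl <;> assumption)]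
    simp [Finset.card_pair hne]
  -- weight as function of (K \ {u,v}).card
  set g : ℕ → ℝ := fun j => (((j:ℝ)+2)*((j:ℝ)+1))⁻¹ with hg
  have hwg : ∀ K ∈ A, ((K.card : ℝ) * ((K.card:ℝ)-1))⁻¹ = g ((K \ {u, v}).card) := by
    intro K hK
    obtain ⟨_, h2, _, _⟩ := hmemA K hK
    rw [hcard2 K hK]
    have : ((K.card - 2 : ℕ) : ℝ) = (K.card : ℝ) - 2 := by
      push_cast [Nat.cast_sub h2]; ring
    rw [hg]; simp only [this]; ring_nf
  -- injectivity of K ↦ K \ {u,v} on A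
  have hinj : ∀ K1 ∈ A, ∀ K2 ∈ A, K1 \ {u, v} = K2 \ {u, v} → K1 = K2 := by
    intro K1 h1 K2 h2 heq
    obtain ⟨_, _, hu1, hv1⟩ := hmemA K1 h1
    obtain ⟨_, _, hu2, hv2⟩ := hmemA K2 h2
    ext a
    by_cases hau : a = u
    · subst hau; simp [hu1, hu2]
    by_cases hav : a = v
    · subst hav; simp [hv1, hv2]
    · constructor <;> intro ha
      · have : a ∈ K1 \ {u, v} := by simp [ha, hau, hav]
        rw [heq] at this; exact (Finset.mem_sdiff.mp this).1
      · have : a ∈ K2 \ {u, v} := by simp [ha, hau, hav]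
        rw [← heq] at this; exact (Finset.mem_sdiff.mp this).1
  -- image lands in W.powerset
  have himg : A.image (fun K => K \ {u, v}) ⊆ W.powerset := by
    intro T hT
    rw [Finset.mem_image] at hT
    obtain ⟨K, hK, rfl⟩ := hT
    obtain ⟨hcl, _, hu, hv⟩ := hmemA K hK
    rw [Finset.mem_powerset]
    intro a ha
    rw [Finset.mem_sdiff] at ha
    obtain ⟨haK, hauv⟩ := ha
    simp only [Finset.mem_insert, Finset.mem_singleton, not_or] at hauv
    rw [hW, Finset.mem_inter, G.mem_neighborFinset, G.mem_neighborFinset]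
    exact ⟨hcl hu haK (Ne.symm hauv.1), hcl hv haK (Ne.symm hauv.2)⟩
  have hgnonneg : ∀ j, 0 ≤ g j := by intro j; rw [hg]; positivity
  calc ∑ K ∈ A, ((K.card : ℝ) * ((K.card:ℝ)-1))⁻¹
      = ∑ K ∈ A, g ((K \ {u, v}).card) := Finset.sum_congr rfl hwg
    _ = ∑ T ∈ A.image (fun K => K \ {u, v}), g T.card := by rw [Finset.sum_image hinj]
    _ ≤ ∑ T ∈ W.powerset, g T.card := by
        apply Finset.sum_le_sum_of_subset_of_nonneg himg
        intro T _ _; exact hgnonneg _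
    _ = ∑ j ∈ range (W.card + 1), (W.card.choose j) • g j := by
        rw [Finset.sum_powerset]
        exact Finset.sum_congr rfl fun j _ => Finset.sum_powersetCard j W (fun n => g n)
    _ ≤ ∑ j ∈ range (W.card + 1), (d.choose j : ℝ) * g j := by
        apply Finset.sum_le_sum
        intro j _
        rw [nsmul_eq_mul]
        exact mul_le_mul_of_nonneg_right
          (by exact_mod_cast Nat.choose_le_choose j hWcard) (hgnonneg j)
    _ ≤ ∑ j ∈ range (d + 1), (d.choose j : ℝ) * g j := by
        apply Finset.sum_le_sum_of_subset_of_nonneg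
        · exact Finset.range_subset_range.mpr (by omega)
        · intro j _ _; positivity
    _ = (2^(d+2) - (d:ℝ) - 3)/(((d:ℝ)+2)*((d:ℝ)+1)) := sum_id d
/-- Every graph with `n` vertices, `m` edges and maximum degree at most `Δ ≥ 1`
has at most `1 + n + ((2^(Δ+1) - Δ - 2)/C(Δ+1,2))·m` cliques. -/
theorem clique_count_bounded_degree {V : Type*} [Fintype V]
    (G : SimpleGraph V) [DecidableRel G.Adj] (Δ : ℕ) (hΔ : 1 ≤ Δ)
    (hdeg : ∀ v, G.degree v ≤ Δ) :
    (cliqueCount G : ℝ) ≤ 1 + Fintype.card V +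
      ((2 ^ (Δ + 1) - Δ - 2) / ((Δ + 1).choose 2 : ℝ)) * Nat.card G.edgeSet := by
  classical
  obtain ⟨d, rfl⟩ : ∃ d, Δ = d + 1 := ⟨Δ - 1, (Nat.succ_pred_eq_of_pos hΔ).symm⟩
  set S : Finset (Finset V) :=
    univ.filter (fun s : Finset V => G.IsClique (s : Set V) ∧ 2 ≤ s.card) with hS
  -- Step 1: cliqueCount = 1 + n + S.card
  have hcc : cliqueCount G = 1 + Fintype.card V + S.card := by
    rw [cliqueCount, Nat.card_eq_fintype_card, Fintype.card_subtype]
    have hsplit := Finset.card_filter_add_card_filter_not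
      (s := univ.filter (fun s : Finset V => G.IsClique (s : Set V)))
      (p := fun s => 2 ≤ s.card)
    have he1 : (univ.filter (fun s : Finset V => G.IsClique (s : Set V))).filter
        (fun s => 2 ≤ s.card) = S := by
      rw [hS, Finset.filter_filter]
    have he2 : (univ.filter (fun s : Finset V => G.IsClique (s : Set V))).filter
        (fun s => ¬ 2 ≤ s.card)
        = insert (∅ : Finset V) (univ.image fun a : V => ({a} : Finset V)) := by
      ext s
      simp only [Finset.mem_filter, Finset.mem_univ, true_and, not_le,
        Finset.mem_insert, Finset.mem_image, Nat.lt_succ_iff]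
      constructor
      · rintro ⟨-, hcard⟩
        interval_cases h : s.card
        · exact Or.inl (Finset.card_eq_zero.mp h)
        · refine Or.inr ?_
          obtain ⟨a, ha⟩ := Finset.card_eq_one.mp h
          exact ⟨a, ha.symm⟩
      · rintro (rfl | ⟨a, rfl⟩)
        · simp [SimpleGraph.isClique_empty]
        · simp [SimpleGraph.isClique_singleton]
    have he3 : (insert (∅ : Finset V) (univ.image fun a : V => ({a} : Finset V))).card
        = 1 + Fintype.card V := by
      rw [Finset.card_insert_of_notMem (by
        simp only [Finset.mem_image]
        rintro ⟨a, -, ha⟩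
        exact Finset.singleton_ne_empty a ha)]
      rw [Finset.card_image_of_injective _ (fun a b h => Finset.singleton_injective h)]
      simp [Finset.card_univ]
      omega
    rw [he1, he2, he3] at hsplit
    omega
  rw [hcc]
  push_cast
  have hm : (Nat.card G.edgeSet : ℝ) = (G.edgeFinset.card : ℝ) := by
    rw [Nat.card_eq_fintype_card, SimpleGraph.edgeFinset_card]
  -- Step 2: the double count
  set P : Finset (V × V) := univ.filter (fun p : V × V => G.Adj p.1 p.2) with hP
  set B : ℝ := (2^(d+2) - (d:ℝ) - 3)/(((d:ℝ)+2)*((d:ℝ)+1)) with hB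
  have key : (S.card : ℝ) ≤ P.card * B := by
    have hone : ∀ K ∈ S, (1:ℝ)
        = ∑ p ∈ P.filter (fun p => p.1 ∈ K ∧ p.2 ∈ K), ((K.card : ℝ)*((K.card:ℝ)-1))⁻¹ := by
      intro K hK
      simp only [hS, Finset.mem_filter, Finset.mem_univ, true_and] at hK
      obtain ⟨hcl, h2⟩ := hK
      have hPK : P.filter (fun p => p.1 ∈ K ∧ p.2 ∈ K) = K.offDiag := by
        ext p
        simp only [hP, Finset.mem_filter, Finset.mem_univ, true_and, Finset.mem_offDiag]
        constructor
        · rintro ⟨hadj, h1, h2⟩; exact ⟨h1, h2, hadj.ne⟩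
        · rintro ⟨h1, h2, hne⟩; exact ⟨hcl h1 h2 hne, h1, h2⟩
      rw [hPK, Finset.sum_const, Finset.offDiag_card, nsmul_eq_mul]
      have hcast : ((K.card * K.card - K.card : ℕ) : ℝ) = (K.card:ℝ)*((K.card:ℝ)-1) := by
        rw [Nat.cast_sub (Nat.le_mul_of_pos_left _ (by omega))]
        push_cast; ring
      rw [hcast, mul_inv_cancel₀]
      have : (2:ℝ) ≤ (K.card : ℝ) := by exact_mod_cast h2
      nlinarith
    calc (S.card : ℝ) = ∑ K ∈ S, (1:ℝ) := by rw [Finset.sum_const, nsmul_eq_mul, mul_one]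
      _ = ∑ K ∈ S, ∑ p ∈ P.filter (fun p => p.1 ∈ K ∧ p.2 ∈ K),
            ((K.card : ℝ)*((K.card:ℝ)-1))⁻¹ := Finset.sum_congr rfl hone
      _ = ∑ K ∈ S, ∑ p ∈ P, if p.1 ∈ K ∧ p.2 ∈ K then ((K.card : ℝ)*((K.card:ℝ)-1))⁻¹
            else 0 := Finset.sum_congr rfl fun K _ => Finset.sum_filter _ _
      _ = ∑ p ∈ P, ∑ K ∈ S, if p.1 ∈ K ∧ p.2 ∈ K then ((K.card : ℝ)*((K.card:ℝ)-1))⁻¹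
            else 0 := Finset.sum_comm
      _ = ∑ p ∈ P, ∑ K ∈ S.filter (fun K => p.1 ∈ K ∧ p.2 ∈ K),
            ((K.card : ℝ)*((K.card:ℝ)-1))⁻¹ :=
          Finset.sum_congr rfl fun p _ => (Finset.sum_filter _ _).symm
      _ ≤ ∑ p ∈ P, B := by
          refine Finset.sum_le_sum fun p hp => ?_
          have hadj : G.Adj p.1 p.2 := by
            simp only [hP, Finset.mem_filter] at hp; exact hp.2
          exact inner_bound G d (by simpa using hdeg) hadj
      _ = P.card * B := by rw [Finset.sum_const, nsmul_eq_mul]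
  -- Step 3: P.card = 2 * m
  have hPcard : (P.card : ℕ) = 2 * G.edgeFinset.card := by
    rw [SimpleGraph.two_mul_card_edgeFinset]
  -- Step 4: choose identity
  have hch : ((d+2).choose 2 : ℝ) * 2 = ((d:ℝ)+2)*((d:ℝ)+1) := by
    have h := Nat.add_one_mul_choose_eq (d+1) 1
    simp only [Nat.succ_eq_add_one, Nat.choose_one_right,
      show d+1+1 = d+2 from rfl] at h
    exact_mod_cast congrArg (Nat.cast (R := ℝ)) h.symm
  -- Assemble
  have hfinal : (S.card : ℝ) ≤
      ((2 ^ (d + 1 + 1) - ((d:ℝ)+1) - 2) / ((d + 1 + 1).choose 2 : ℝ)) * G.edgeFinset.card := by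
    have hchpos : (0:ℝ) < ((d+2).choose 2 : ℝ) := by
      have : 0 < (d+2).choose 2 := Nat.choose_pos (by omega)
      exact_mod_cast this
    have hrw : ((2 ^ (d + 1 + 1) - ((d:ℝ)+1) - 2) / ((d + 1 + 1).choose 2 : ℝ))
        = 2 * B := by
      rw [hB, show d+1+1 = d+2 from rfl, ← hch]
      field_simp
      ring
    rw [hrw]
    calc (S.card : ℝ) ≤ P.card * B := key
      _ = 2 * B * G.edgeFinset.card := by
          rw [show ((P.card : ℕ):ℝ) = ((2 * G.edgeFinset.card : ℕ) : ℝ) from by rw [hPcard]]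
          push_cast; ring
  rw [hm]
  push_cast at hfinal ⊢
  linarith
end

section
/- Let G be a finite simple graph with n vertices and maximum degree at most Δ, where Δ ≥ 1. Then c(G) ≤ 1 + ((2^{Δ+1} − 1)/(Δ+1))·n; equivalently, (Δ+1)·(c(G) − 1) ≤ (2^{Δ+1} − 1)·n. -/
open Finset

theorem sum_range_choose_div_add_one (d : ℕ) :
    ∑ j ∈ range (d + 1), (d.choose j : ℝ) / (j + 1) = (2 ^ (d + 1) - 1) / (d + 1) := by
  have hterm (j : ℕ) : (d.choose j : ℝ) / (j + 1) * (d + 1) = (d + 1).choose (j + 1) := by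
    rw [div_mul_eq_mul_div, div_eq_iff (by positivity), mul_comm]
    exact_mod_cast Nat.add_one_mul_choose_eq d j
  have hsum : ∑ j ∈ range (d + 1), ((d + 1).choose (j + 1) : ℝ) = 2 ^ (d + 1) - 1 := by
    have h := Nat.sum_range_choose (d + 1)
    rw [sum_range_succ', Nat.choose_zero_right] at h
    rw [eq_sub_iff_add_eq]
    exact_mod_cast h
  rw [eq_div_iff (by positivity), sum_mul]
  simp_rw [hterm]
  exact hsum

theorem sum_powerset_inv_card_add_one {α : Type*} (s : Finset α) :
    ∑ t ∈ s.powerset, ((#t : ℝ) + 1)⁻¹ = (2 ^ (#s + 1) - 1) / (#s + 1) := by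
  rw [sum_powerset_apply_card (fun m => ((m : ℝ) + 1)⁻¹), ← sum_range_choose_div_add_one]
  simp only [nsmul_eq_mul, div_eq_mul_inv]

theorem monotone_two_pow_add_one_sub_one_div :
    Monotone fun d : ℕ => ((2 : ℝ) ^ (d + 1) - 1) / (d + 1) := by
  refine monotone_nat_of_le_succ fun d => ?_
  rw [div_le_div_iff₀ (by positivity) (by positivity)]
  have h : (1 : ℝ) ≤ 2 ^ (d + 1) := one_le_pow₀ (by norm_num)
  push_cast
  nlinarith [pow_succ (2 : ℝ) (d + 1), mul_le_mul_of_nonneg_left h (d.cast_nonneg (α := ℝ))]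

theorem sum_sum_inv_card_eq_card_erase_empty {α : Type*} [DecidableEq α]
    (𝒜 : Finset (Finset α)) :
    ∑ s ∈ 𝒜, ∑ _a ∈ s, (#s : ℝ)⁻¹ = #(𝒜.erase ∅) := by
  have hs (s : Finset α) : ∑ _a ∈ s, (#s : ℝ)⁻¹ = if s ≠ ∅ then 1 else 0 := by
    rw [sum_const, nsmul_eq_mul]
    split_ifs with h
    · exact mul_inv_cancel₀ (by simpa [card_eq_zero] using h)
    · simp [not_not.1 h]
  simp_rw [hs]
  rw [sum_ite, sum_const_zero, add_zero, sum_const, nsmul_one, filter_ne']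

namespace SimpleGraph

variable {V : Type*} {G : SimpleGraph V}

theorem IsClique.erase_subset_neighborFinset [DecidableEq V] {v : V} [Fintype (G.neighborSet v)]
    {s : Finset V} (hs : G.IsClique (s : Set V)) (hv : v ∈ s) :
    s.erase v ⊆ G.neighborFinset v := fun u hu =>
  (G.mem_neighborFinset v u).2 <|
    hs hv (mem_of_mem_erase hu) (ne_of_mem_erase hu).symm

variable (G) [Fintype V] [DecidableEq V] [DecidableRel G.Adj]

def cliques : Finset (Finset V) := {s | G.IsClique (s : Set V)}

theorem mem_cliques {s : Finset V} : s ∈ G.cliques ↔ G.IsClique (s : Set V) := by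
  simp [cliques]

theorem cliqueCount_eq_card_cliques : cliqueCount G = #G.cliques := by
  rw [cliqueCount, Nat.card_eq_fintype_card, Fintype.card_subtype, cliques]

theorem sum_inv_card_cliques_mem_le (v : V) :
    ∑ s ∈ G.cliques with v ∈ s, (#s : ℝ)⁻¹
      ≤ (2 ^ (G.degree v + 1) - 1) / (G.degree v + 1) := by
  have hinj : Set.InjOn (fun s : Finset V => s.erase v) ↑(G.cliques.filter (v ∈ ·)) :=
    (erase_injOn' v).mono fun s hs => (mem_filter.1 hs).2
  calc ∑ s ∈ G.cliques with v ∈ s, (#s : ℝ)⁻¹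
      = ∑ t ∈ (G.cliques.filter (v ∈ ·)).image (·.erase v), ((#t : ℝ) + 1)⁻¹ := by
        rw [sum_image hinj]
        refine sum_congr rfl fun s hs => ?_
        rw [← card_erase_add_one (mem_filter.1 hs).2]
        push_cast
        rfl
    _ ≤ ∑ t ∈ (G.neighborFinset v).powerset, ((#t : ℝ) + 1)⁻¹ := by
        refine sum_le_sum_of_subset_of_nonneg (image_subset_iff.2 fun s hs => ?_)
          (fun _ _ _ => by positivity)
        obtain ⟨hs, hv⟩ := mem_filter.1 hs
        exact mem_powerset.2 ((G.mem_cliques.1 hs).erase_subset_neighborFinset hv)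
    _ = (2 ^ (G.degree v + 1) - 1) / (G.degree v + 1) := by
        rw [sum_powerset_inv_card_add_one, card_neighborFinset_eq_degree]

theorem card_cliques_eq_one_add_sum_sum_inv_card :
    (#G.cliques : ℝ) = 1 + ∑ v, ∑ s ∈ G.cliques with v ∈ s, (#s : ℝ)⁻¹ := by
  rw [← card_erase_add_one ((G.mem_cliques (s := ∅)).2 (by simp)), Nat.cast_add, Nat.cast_one,
    ← sum_sum_inv_card_eq_card_erase_empty,
    sum_comm' (t' := univ) (s' := fun v => G.cliques.filter (v ∈ ·))
      (fun s v => by simp [and_comm]), add_comm]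

end SimpleGraph

theorem clique_count_bounded_degree_vertices_general {V : Type*} [Fintype V]
    (G : SimpleGraph V) [DecidableRel G.Adj] (Δ : ℕ)
    (hdeg : ∀ v, G.degree v ≤ Δ) :
    (cliqueCount G : ℝ) ≤ 1 +
      ((2 ^ (Δ + 1) - 1) / ((Δ : ℝ) + 1)) * Fintype.card V := by
  classical
  rw [G.cliqueCount_eq_card_cliques, G.card_cliques_eq_one_add_sum_sum_inv_card]
  gcongr
  calc ∑ v, ∑ s ∈ G.cliques with v ∈ s, (#s : ℝ)⁻¹
      ≤ ∑ _v : V, ((2 : ℝ) ^ (Δ + 1) - 1) / (Δ + 1) := sum_le_sum fun v _ =>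
        (G.sum_inv_card_cliques_mem_le v).trans (monotone_two_pow_add_one_sub_one_div (hdeg v))
    _ = _ := by rw [sum_const, nsmul_eq_mul, card_univ, mul_comm]

/-- Every graph with `n` vertices and maximum degree at most `Δ ≥ 1`
has at most `1 + ((2^(Δ+1) - 1)/(Δ+1))·n` cliques. -/
theorem clique_count_bounded_degree_vertices {V : Type*} [Fintype V]
    (G : SimpleGraph V) [DecidableRel G.Adj] (Δ : ℕ) (hΔ : 1 ≤ Δ)
    (hdeg : ∀ v, G.degree v ≤ Δ) :
    (cliqueCount G : ℝ) ≤ 1 +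
      ((2 ^ (Δ + 1) - 1) / ((Δ : ℝ) + 1)) * Fintype.card V :=
  clique_count_bounded_degree_vertices_general G Δ hdeg
end

section
/- Let Δ ≥ 1 and let n and m be non-negative integers such that 2m ≤ Δ·n and C(Δ+1,2) divides m. Then there exists a finite simple graph G with n vertices, m edges, and maximum degree at most Δ such that c(G) = 1 + n + (2^{Δ+1} − Δ − 2)·(m / C(Δ+1,2)). -/
open Finset

namespace Finset

variable {α : Type*} [DecidableEq α]

lemma card_powerset_filter_card_le_one (s : Finset α) :
    #{t ∈ s.powerset | #t ≤ 1} = #s + 1 := by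
  have hsplit : ({t ∈ s.powerset | #t ≤ 1} : Finset (Finset α)) =
      s.powersetCard 0 ∪ s.powersetCard 1 := by
    ext t
    simp only [mem_filter, mem_union, mem_powersetCard, mem_powerset, ← and_or_left]
    exact and_congr_right fun _ => by omega
  rw [hsplit, card_union_of_disjoint, card_powersetCard, card_powersetCard, Nat.choose_zero_right,
    Nat.choose_one_right, add_comm]
  exact disjoint_left.2 fun t h0 h1 => by
    rw [mem_powersetCard] at h0 h1
    omega

lemma card_powerset_filter_one_lt_card (s : Finset α) :
    #{t ∈ s.powerset | 1 < #t} = 2 ^ #s - (#s + 1) := by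
  have h := card_filter_add_card_filter_not (s := s.powerset) fun t => #t ≤ 1
  simp only [not_le, card_powerset, card_powerset_filter_card_le_one] at h
  omega

end Finset

lemma Nat.two_mul_choose_two (b : ℕ) : 2 * b.choose 2 = b * (b - 1) := by
  rw [Nat.choose_two_right, mul_comm, Nat.div_two_mul_two_of_even (Nat.even_mul_pred_self b)]

lemma cliqueCount_eq_card_add_one_add_card_filter {V : Type*} [Fintype V] [DecidableEq V]
    (G : SimpleGraph V) [DecidableRel G.Adj] :
    cliqueCount G = Fintype.card V + 1 + #{s : Finset V | G.IsClique (s : Set V) ∧ 1 < #s} := by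
  have hsmall : ({s : Finset V | G.IsClique (s : Set V) ∧ #s ≤ 1} : Finset (Finset V)) =
      {s ∈ (univ : Finset V).powerset | #s ≤ 1} := by
    ext s
    simp only [mem_filter, mem_univ, powerset_univ, true_and, and_iff_right_iff_imp]
    exact fun hs => SimpleGraph.IsClique.of_subsingleton (card_le_one_iff_subsingleton.1 hs)
  rw [cliqueCount, Nat.card_eq_fintype_card, Fintype.card_subtype,
    ← card_filter_add_card_filter_not fun s : Finset V => #s ≤ 1]
  simp only [filter_filter, not_le, hsmall, card_powerset_filter_card_le_one, card_univ]

lemma Fin.card_filter_val_div_eq {n d i : ℕ} (hd : 0 < d) (h : (i + 1) * d ≤ n) :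
    #{v : Fin n | (v : ℕ) / d = i} = d := by
  have hid : i * d ≤ (i + 1) * d := by gcongr; omega
  have hsub : ({v | (v : ℕ) < i * d} : Finset (Fin n)) ⊆
      ({v | (v : ℕ) < (i + 1) * d} : Finset (Fin n)) :=
    monotone_filter_right _ fun _ _ hv => lt_of_lt_of_le hv hid
  have hfib : ({v | (v : ℕ) / d = i} : Finset (Fin n)) =
      ({v | (v : ℕ) < (i + 1) * d} : Finset (Fin n)) \
        ({v | (v : ℕ) < i * d} : Finset (Fin n)) := by
    ext v
    simp only [mem_filter, mem_sdiff, mem_univ, true_and, ← Nat.div_lt_iff_lt_mul hd]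
    omega
  rw [hfib, card_sdiff_of_subset hsub, Fin.card_filter_val_lt, Fin.card_filter_val_lt,
    Nat.min_eq_right h, Nat.min_eq_right (hid.trans h), add_mul, one_mul]
  omega

namespace SimpleGraph

variable {V ι : Type*}

def blockGraph (f : V → ι) (S : Finset ι) : SimpleGraph V where
  Adj v w := v ≠ w ∧ f v = f w ∧ f v ∈ S
  symm := ⟨fun _ _ ⟨hne, heq, hS⟩ => ⟨hne.symm, heq.symm, heq ▸ hS⟩⟩
  loopless := ⟨fun _ h => h.1 rfl⟩

variable {f : V → ι} {S : Finset ι}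

@[simp]
lemma blockGraph_adj {v w : V} :
    (blockGraph f S).Adj v w ↔ v ≠ w ∧ f v = f w ∧ f v ∈ S :=
  Iff.rfl

lemma isClique_blockGraph_iff {s : Set V} :
    (blockGraph f S).IsClique s ↔ s.Subsingleton ∨ ∃ i ∈ S, s ⊆ f ⁻¹' {i} := by
  refine ⟨fun hs => ?_, ?_⟩
  · refine or_iff_not_imp_left.2 fun hnt => ?_
    obtain ⟨v, hv, w, hw, hvw⟩ := Set.not_subsingleton_iff.1 hnt
    refine ⟨f v, (hs hv hw hvw).2.2, fun u hu => ?_⟩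
    obtain rfl | huv := eq_or_ne u v
    · rfl
    · exact (hs hv hu huv.symm).2.1.symm
  · rintro (hs | ⟨i, hi, hs⟩)
    · exact IsClique.of_subsingleton hs
    · intro v hv w hw hvw
      exact ⟨hvw, (hs hv).trans (hs hw).symm, (hs hv : f v = i) ▸ hi⟩

lemma two_mul_card_edgeSet [Fintype V] (G : SimpleGraph V) :
    2 * Nat.card G.edgeSet = ∑ v, Nat.card (G.neighborSet v) := by
  classical
  simp only [Nat.card_eq_fintype_card, card_neighborSet_eq_degree, sum_degrees_eq_twice_card_edges,
    edgeFinset_card]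

lemma card_neighborSet_blockGraph [Fintype V] [DecidableEq ι] (v : V) :
    Nat.card ((blockGraph f S).neighborSet v) = if f v ∈ S then #{w | f w = f v} - 1 else 0 := by
  classical
  have hnbhd : (blockGraph f S).neighborSet v =
      ↑(if f v ∈ S then ({w | f w = f v} : Finset V).erase v else ∅) := by
    ext w
    split_ifs with h <;> simp [h, eq_comm, and_comm]
  rw [Nat.card_coe_set_eq, hnbhd, Set.ncard_coe_finset]
  split_ifs
  · exact card_erase_of_mem (by simp)
  · rfl

lemma card_edgeSet_blockGraph [Fintype V] [DecidableEq ι] :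
    Nat.card (blockGraph f S).edgeSet = ∑ i ∈ S, (#{v | f v = i}).choose 2 := by
  apply Nat.eq_of_mul_eq_mul_left two_pos
  simp_rw [two_mul_card_edgeSet, card_neighborSet_blockGraph, mul_sum, Nat.two_mul_choose_two]
  calc ∑ v, (if f v ∈ S then #{w | f w = f v} - 1 else 0)
      = ∑ v with f v ∈ S, (#{w | f w = f v} - 1) := (sum_filter _ _).symm
    _ = ∑ i ∈ S, ∑ v with f v = i, (#{w | f w = i} - 1) :=
      (sum_fiberwise_eq_sum_filter' univ S f fun i => #{w | f w = i} - 1).symm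
    _ = ∑ i ∈ S, #{w | f w = i} * (#{w | f w = i} - 1) := by simp only [sum_const, smul_eq_mul]

lemma cliqueCount_blockGraph [Fintype V] [DecidableEq V] [DecidableEq ι] :
    cliqueCount (blockGraph f S) =
      Fintype.card V + 1 + ∑ i ∈ S, (2 ^ #{v | f v = i} - (#{v | f v = i} + 1)) := by
  classical
  have hlarge : ({s : Finset V | (blockGraph f S).IsClique (s : Set V) ∧ 1 < #s} :
      Finset (Finset V)) =
        S.biUnion fun i => {t ∈ ({v | f v = i} : Finset V).powerset | 1 < #t} := by
    ext s
    simp only [mem_filter, mem_univ, true_and, mem_biUnion, mem_powerset, isClique_blockGraph_iff,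
      ← card_le_one_iff_subsingleton]
    constructor
    · rintro ⟨hs | ⟨i, hi, hsub⟩, hcard⟩
      · omega
      · exact ⟨i, hi, fun v hv => by simpa using hsub hv, hcard⟩
    · rintro ⟨i, hi, hsub, hcard⟩
      exact ⟨Or.inr ⟨i, hi, fun v hv => by simpa using hsub hv⟩, hcard⟩
  have hdisj : (S : Set ι).PairwiseDisjoint
      fun i => {t ∈ ({v | f v = i} : Finset V).powerset | 1 < #t} := by
    intro i _ j _ hij
    refine Finset.disjoint_left.2 fun t hti htj => ?_
    simp only [mem_filter, mem_powerset] at hti htj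
    obtain ⟨v, hv⟩ := card_pos.1 (by omega : 0 < #t)
    exact hij ((mem_filter.1 (hti.1 hv)).2.symm.trans (mem_filter.1 (htj.1 hv)).2)
  rw [cliqueCount_eq_card_add_one_add_card_filter, hlarge, card_biUnion hdisj]
  simp only [card_powerset_filter_one_lt_card]

end SimpleGraph

/-- For all `Δ ≥ 1`, `n`, `m` with `2m ≤ Δn` and `C(Δ+1,2) ∣ m`, there is a
graph with `n` vertices, `m` edges, maximum degree at most `Δ`, and exactly
`1 + n + (2^(Δ+1) - Δ - 2)·m/C(Δ+1,2)` cliques. -/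
theorem clique_count_bounded_degree_exists (Δ n m : ℕ) (hΔ : 1 ≤ Δ)
    (hm : 2 * m ≤ Δ * n) (hdvd : (Δ + 1).choose 2 ∣ m) :
    ∃ G : SimpleGraph (Fin n),
      (∀ v, Nat.card (G.neighborSet v) ≤ Δ) ∧ Nat.card G.edgeSet = m ∧
        cliqueCount G = 1 + n + (2 ^ (Δ + 1) - Δ - 2) * (m / (Δ + 1).choose 2) := by
  set k := m / (Δ + 1).choose 2
  have hm_eq : m = k * (Δ + 1).choose 2 := (Nat.div_mul_cancel hdvd).symm
  have hkn : k * (Δ + 1) ≤ n := by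
    refine Nat.le_of_mul_le_mul_left (le_of_eq_of_le ?_ hm) hΔ
    calc Δ * (k * (Δ + 1)) = k * (2 * (Δ + 1).choose 2) := by
          rw [Nat.two_mul_choose_two, Nat.add_sub_cancel]; ring
      _ = 2 * m := by rw [hm_eq]; ring
  have hblock : ∀ i ∈ range k, #{v : Fin n | (v : ℕ) / (Δ + 1) = i} = Δ + 1 := fun i hi =>
    Fin.card_filter_val_div_eq Δ.succ_pos
      ((Nat.mul_le_mul_right _ (mem_range.1 hi)).trans hkn)
  refine ⟨SimpleGraph.blockGraph (fun v : Fin n => (v : ℕ) / (Δ + 1)) (range k),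
    fun v => ?_, ?_, ?_⟩
  · rw [SimpleGraph.card_neighborSet_blockGraph]
    split_ifs with hv
    · rw [hblock _ hv, Nat.add_sub_cancel]
    · exact Nat.zero_le Δ
  · rw [SimpleGraph.card_edgeSet_blockGraph, sum_congr rfl fun i hi => by rw [hblock i hi],
      sum_const, card_range, smul_eq_mul, hm_eq]
  · rw [SimpleGraph.cliqueCount_blockGraph, sum_congr rfl fun i hi => by rw [hblock i hi],
      sum_const, card_range, smul_eq_mul, Fintype.card_fin,
      show 2 ^ (Δ + 1) - (Δ + 1 + 1) = 2 ^ (Δ + 1) - Δ - 2 by omega]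
    ring
end

section
/- Every d-degenerate finite simple graph G with n ≥ d vertices has at most 2^d·(n − d + 1) cliques. -/
/-- A graph is `d`-degenerate if every nonempty set of vertices contains a
vertex with at most `d` neighbours in that set. -/
def IsDegenerate {V : Type*} (G : SimpleGraph V) (d : ℕ) : Prop :=
  ∀ S : Finset V, S.Nonempty → ∃ v ∈ S, Nat.card {u ∈ (S : Set V) | G.Adj v u} ≤ d

/-! Bound the cliques inside a vertex set `S`. Pick a vertex `v` of `S` with at most `d`
neighbours in `S`. A clique of `S` containing `v` is determined by its other vertices, which are
neighbours of `v`, so there are at most `2 ^ d` of them; the remaining cliques are the cliques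
of `S \ {v}`. By induction on `S` this gives `2 ^ d * (#S - d + 1)` while `#S > d`, and once
`#S ≤ d` the trivial bound `2 ^ #S` suffices. -/

open Finset

lemma IsDegenerate.exists_mem_card_filter_adj_le {V : Type*} {G : SimpleGraph V}
    [DecidableRel G.Adj] {d : ℕ} (hG : IsDegenerate G d) {S : Finset V}
    (hS : S.Nonempty) : ∃ v ∈ S, #(S.filter (G.Adj v)) ≤ d := by
  obtain ⟨v, hvS, hv⟩ := hG S hS
  refine ⟨v, hvS, ?_⟩
  have hfilter : {u ∈ (S : Set V) | G.Adj v u} = ↑(S.filter (G.Adj v)) := by ext; simp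
  rwa [hfilter, Nat.card_coe_set_eq, Set.ncard_coe_finset] at hv

namespace SimpleGraph

variable {V : Type*} [DecidableEq V] (G : SimpleGraph V) [DecidableRel G.Adj]

def cliquesIn (S : Finset V) : Finset (Finset V) :=
  S.powerset.filter fun s => G.IsClique (s : Set V)

variable {G}

@[simp]
lemma mem_cliquesIn {S s : Finset V} : s ∈ G.cliquesIn S ↔ s ⊆ S ∧ G.IsClique (s : Set V) := by
  simp [cliquesIn]

lemma card_cliquesIn_le_two_pow_card (S : Finset V) : #(G.cliquesIn S) ≤ 2 ^ #S :=
  (card_filter_le _ _).trans (card_powerset S).le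

lemma card_cliquesIn_filter_mem_le {S : Finset V} (v : V) :
    #((G.cliquesIn S).filter (v ∈ ·)) ≤ 2 ^ #(S.filter (G.Adj v)) := by
  rw [← card_powerset]
  refine card_le_card_of_injOn (·.erase v) (fun s hs => ?_) (fun s hs t ht hst => ?_)
  · simp only [coe_filter, mem_cliquesIn, Set.mem_ofPred_eq] at hs
    obtain ⟨⟨hsS, hs⟩, hvs⟩ := hs
    refine mem_powerset.2 fun u hu => mem_filter.2 ⟨hsS (mem_of_mem_erase hu), ?_⟩
    exact hs hvs (mem_of_mem_erase hu) (ne_of_mem_erase hu).symm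
  · simp only [coe_filter, Set.mem_ofPred_eq] at hs ht
    rw [← insert_erase hs.2, ← insert_erase ht.2]
    exact congrArg (insert v) hst

lemma filter_notMem_cliquesIn (S : Finset V) (v : V) :
    (G.cliquesIn S).filter (v ∉ ·) = G.cliquesIn (S.erase v) := by
  ext s
  simp only [mem_filter, mem_cliquesIn, subset_erase]
  tauto

lemma card_cliquesIn_le_card_cliquesIn_erase_add {S : Finset V} (v : V) :
    #(G.cliquesIn S) ≤ #(G.cliquesIn (S.erase v)) + 2 ^ #(S.filter (G.Adj v)) := by
  rw [← card_filter_add_card_filter_not (s := G.cliquesIn S) (v ∈ ·), filter_notMem_cliquesIn,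
    add_comm]
  exact Nat.add_le_add_left (card_cliquesIn_filter_mem_le v) _

lemma card_cliquesIn_le_of_isDegenerate {d : ℕ} (hG : IsDegenerate G d) (S : Finset V) :
    #(G.cliquesIn S) ≤ 2 ^ d * (#S - d + 1) := by
  induction S using Finset.strongInduction with
  | H S ih =>
  rcases le_or_gt #S d with hSd | hdS
  · calc #(G.cliquesIn S) ≤ 2 ^ #S := card_cliquesIn_le_two_pow_card S
      _ ≤ 2 ^ d * (#S - d + 1) := by
        rw [Nat.sub_eq_zero_of_le hSd]
        simpa using Nat.pow_le_pow_right two_pos hSd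
  obtain ⟨v, hvS, hv⟩ := hG.exists_mem_card_filter_adj_le (card_pos.1 (by omega : 0 < #S))
  have hcard : #(S.erase v) - d + 1 + 1 = #S - d + 1 := by
    rw [card_erase_of_mem hvS]; omega
  calc #(G.cliquesIn S) ≤ #(G.cliquesIn (S.erase v)) + 2 ^ #(S.filter (G.Adj v)) :=
        card_cliquesIn_le_card_cliquesIn_erase_add v
    _ ≤ 2 ^ d * (#(S.erase v) - d + 1) + 2 ^ d :=
        Nat.add_le_add (ih _ (erase_ssubset hvS)) (Nat.pow_le_pow_right two_pos hv)
    _ = 2 ^ d * (#S - d + 1) := by rw [← hcard]; ring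

end SimpleGraph

open SimpleGraph in
lemma cliqueCount_eq_card_cliquesIn_univ {V : Type*} [Fintype V] [DecidableEq V]
    (G : SimpleGraph V) [DecidableRel G.Adj] : cliqueCount G = #(G.cliquesIn univ) := by
  rw [cliqueCount, Nat.card_eq_fintype_card, ← Fintype.card_coe]
  exact Fintype.card_congr (Equiv.subtypeEquivRight fun s => by simp)

theorem clique_count_degenerate_general {V : Type*} [Fintype V] (G : SimpleGraph V)
    (d : ℕ) (hdeg : IsDegenerate G d) :
    cliqueCount G ≤ 2 ^ d * (Fintype.card V - d + 1) := by
  classical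
  rw [cliqueCount_eq_card_cliquesIn_univ]
  exact G.card_cliquesIn_le_of_isDegenerate hdeg univ

/-- Every `d`-degenerate graph with `n ≥ d` vertices has at most
`2^d·(n - d + 1)` cliques. -/
theorem clique_count_degenerate {V : Type*} [Fintype V] (G : SimpleGraph V)
    (d : ℕ) (hdeg : IsDegenerate G d) (hn : d ≤ Fintype.card V) :
    cliqueCount G ≤ 2 ^ d * (Fintype.card V - d + 1) :=
  clique_count_degenerate_general G d hdeg
end

section
/- Let d ≥ 1 and let G be a d-degenerate finite simple graph with n vertices and m ≥ C(d,2) edges. Then c(G) ≤ n + (2^d − 1)·m/d − ((d − 3)·2^d + d + 1)/2; equivalently, 2d·c(G) ≤ 2d·n + 2(2^d − 1)·m − d·((d − 3)·2^d + d + 1). -/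
/-!
Deleting the edges at a vertex `v` of degree `δ` loses `δ` edges and at most `2 ^ δ - 1` cliques
(the sets `insert v t` with `t` a nonempty set of neighbours of `v`), and an edgeless graph has
`n + 1` cliques.

If `C(k,2) ≤ m < C(k+1,2)`, a vertex of least positive degree `δ` has `δ + 1` vertices of degree at
least `δ` in its closed neighbourhood, so `δ (δ + 1) ≤ 2 m` and `δ < k`. Deleting its edges leaves a
graph in the range of `k` or of `k - 1`, and induction gives `k c(G) ≤ k (n + 1) + cliqueBound k m`:
`(2 ^ δ - 1) / δ` increases with `δ`, and the bound for `k - 1` implies the one for `k` once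
`m ≥ C(k,2)`.

A `d`-degenerate graph with at least `C(d+1,2)` edges has a vertex with `1 ≤ δ ≤ d`; deleting its
edges keeps at least `C(d,2)` edges and costs at most `(2 ^ d - 1) / d` cliques per edge, which
extends the bound for `k = d` to all `m ≥ C(d,2)`.
-/

open Finset SimpleGraph

theorem Nat.choose_two_succ (k : ℕ) : (k + 1).choose 2 = k.choose 2 + k := by
  rw [Nat.choose_succ_succ', Nat.choose_one_right, add_comm]

theorem Nat.choose_two_mul_two (k : ℕ) : k.choose 2 * 2 = k * (k - 1) := by
  rw [Nat.choose_two_right, Nat.div_mul_cancel (Nat.even_mul_pred_self k).two_dvd]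

theorem mul_two_pow_sub_one_le {s t : ℕ} (h : t ≤ s) :
    (s : ℤ) * (2 ^ t - 1) ≤ t * (2 ^ s - 1) := by
  induction s, h using Nat.le_induction with
  | base => rfl
  | succ s hts ih =>
    have key : (2 : ℤ) ^ t - 1 ≤ t * 2 ^ s := by
      rcases Nat.eq_zero_or_pos t with rfl | ht
      · simp
      · have : (2 : ℤ) ^ t ≤ 2 ^ s := pow_le_pow_right₀ (by norm_num) hts
        have : (1 : ℤ) ≤ t := by exact_mod_cast ht
        nlinarith [pow_pos (two_pos : (0 : ℤ) < 2) s]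
    push_cast
    rw [pow_succ]
    linarith

/-- `K_k` has `C(k,2)` edges and `2 ^ k - k - 1` cliques with at least two vertices;
`cliqueBound k m / k` extends this count linearly in the number `m` of edges, with slope
`(2 ^ k - 1) / k`. -/
def cliqueBound (k m : ℕ) : ℤ := k * (2 ^ k - k - 1) + (2 ^ k - 1) * (m - k.choose 2)

theorem cliqueBound_add_le {k δ : ℕ} (m : ℕ) (h : δ ≤ k) :
    cliqueBound k m + k * (2 ^ δ - 1) ≤ cliqueBound k (m + δ) := by
  unfold cliqueBound
  push_cast
  linear_combination mul_two_pow_sub_one_le h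

theorem succ_mul_cliqueBound_le {k m : ℕ} (h : (k + 1).choose 2 ≤ m) :
    (k + 1) * cliqueBound k m ≤ k * cliqueBound (k + 1) m := by
  have hslope := mul_two_pow_sub_one_le (Nat.le_succ k)
  have hm : (0 : ℤ) ≤ m - (k + 1).choose 2 := sub_nonneg.mpr (by exact_mod_cast h)
  unfold cliqueBound
  rw [Nat.choose_two_succ] at hm ⊢
  push_cast [pow_succ] at hm hslope ⊢
  linear_combination mul_le_mul_of_nonneg_right hslope hm

theorem IsDegenerate.anti {V : Type*} {G H : SimpleGraph V} {d : ℕ} (hle : H ≤ G)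
    (hG : IsDegenerate G d) : IsDegenerate H d := fun S hS ↦ by
  obtain ⟨v, hv, hcard⟩ := hG S hS
  refine ⟨v, hv, le_trans (Nat.card_mono ?_
    fun u hu ↦ (⟨hu.1, hle hu.2⟩ : u ∈ (S : Set V) ∧ G.Adj v u)) hcard⟩
  exact S.finite_toSet.subset fun u hu ↦ hu.1

section

variable {V : Type*} [Fintype V] {G : SimpleGraph V} [DecidableRel G.Adj]

theorem exists_degree_pos (hG : G ≠ ⊥) : ∃ v, 0 < G.degree v := by
  obtain ⟨a, b, hab⟩ := ne_bot_iff_exists_adj.mp hG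
  exact ⟨a, (G.degree_pos_iff_exists_adj a).mpr ⟨b, hab⟩⟩

theorem IsDegenerate.exists_degree_pos_le {d : ℕ} (hdeg : IsDegenerate G d) (hG : G ≠ ⊥) :
    ∃ v, 0 < G.degree v ∧ G.degree v ≤ d := by
  obtain ⟨v, hv, hcard⟩ := hdeg {v | 0 < G.degree v}
    (let ⟨v, hv⟩ := exists_degree_pos hG; ⟨v, mem_filter.mpr ⟨mem_univ _, hv⟩⟩)
  refine ⟨v, (mem_filter.mp hv).2, ?_⟩
  have hnbr : {u ∈ (({v | 0 < G.degree v} : Finset V) : Set V) | G.Adj v u}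
      = (G.neighborFinset v : Set V) := by
    ext u
    simp only [coe_filter, mem_univ, true_and, Set.mem_ofPred_eq, coe_neighborFinset,
      mem_neighborSet, and_iff_right_iff_imp]
    exact fun h ↦ (G.degree_pos_iff_exists_adj u).mpr ⟨v, h.symm⟩
  rwa [hnbr, Nat.card_coe_set_eq, Set.ncard_coe_finset, card_neighborFinset_eq_degree] at hcard

variable [DecidableEq V]

theorem cliqueCount_eq_card : cliqueCount G = #{s : Finset V | G.IsClique (s : Set V)} := by
  rw [cliqueCount, Nat.card_eq_fintype_card, Fintype.card_subtype]

theorem card_cliques_le_of_eq_bot (hG : G = ⊥) :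
    #{s : Finset V | G.IsClique (s : Set V)} ≤ Fintype.card V + 1 := by
  subst hG
  calc #{s : Finset V | (⊥ : SimpleGraph V).IsClique (s : Set V)}
      ≤ #(insert ∅ (univ.map ⟨({·}), singleton_injective⟩)) := by
        refine card_le_card fun s hs ↦ ?_
        rw [mem_filter, isClique_bot_iff, ← card_le_one_iff_subsingleton] at hs
        rcases Nat.le_one_iff_eq_zero_or_eq_one.mp hs.2 with h | h
        · rw [card_eq_zero.mp h]
          exact mem_insert_self _ _
        · obtain ⟨a, rfl⟩ := card_eq_one.mp h
          exact mem_insert_of_mem (mem_map_of_mem _ (mem_univ a))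
    _ ≤ Fintype.card V + 1 := by
        refine (card_insert_le _ _).trans ?_
        simp

variable (G) in
theorem card_cliques_le_deleteIncidenceSet (v : V) :
    #{s : Finset V | G.IsClique (s : Set V)} ≤
      #{s : Finset V | (G.deleteIncidenceSet v).IsClique (s : Set V)} + (2 ^ G.degree v - 1) := by
  set C := ({s | (G.deleteIncidenceSet v).IsClique (s : Set V)} : Finset (Finset V))
  set I := (G.neighborFinset v).powerset.image (insert v)
  have hsub : ({s | G.IsClique (s : Set V)} : Finset (Finset V)) ⊆ C ∪ I := by
    intro s hs
    rw [mem_filter] at hs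
    by_cases hvs : v ∈ s
    · refine mem_union_right _ (mem_image.mpr ⟨s.erase v, ?_, insert_erase hvs⟩)
      refine mem_powerset.mpr fun u hu ↦ ?_
      rw [mem_neighborFinset]
      exact hs.2 hvs (mem_of_mem_erase hu) (ne_of_mem_erase hu).symm
    · refine mem_union_left _ (mem_filter.mpr ⟨mem_univ _, fun a ha b hb hab ↦ ?_⟩)
      exact deleteIncidenceSet_adj.mpr
        ⟨hs.2 ha hb hab, ne_of_mem_of_not_mem ha hvs, ne_of_mem_of_not_mem hb hvs⟩
  have hI : #I ≤ 2 ^ G.degree v :=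
    card_image_le.trans (by rw [card_powerset, card_neighborFinset_eq_degree])
  -- `{v}` lies in both `C` and `I`, which saves the `- 1`
  have hv : {v} ∈ C ∩ I := by
    refine mem_inter.mpr ⟨mem_filter.mpr ⟨mem_univ _, ?_⟩, mem_image.mpr ⟨∅, ?_, rfl⟩⟩
    · simp
    · exact empty_mem_powerset _
  have hCI := card_union_add_card_inter C I
  have := card_le_card hsub
  have := card_pos.mpr ⟨_, hv⟩
  omega

theorem exists_degree_pos_mul_succ_le (hG : G ≠ ⊥) :
    ∃ v, 0 < G.degree v ∧ G.degree v * (G.degree v + 1) ≤ 2 * #G.edgeFinset := by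
  obtain ⟨v, hv, hmin⟩ := exists_min_image {v | 0 < G.degree v} (G.degree ·)
    (let ⟨v, hv⟩ := exists_degree_pos hG; ⟨v, mem_filter.mpr ⟨mem_univ _, hv⟩⟩)
  rw [mem_filter] at hv
  refine ⟨v, hv.2, ?_⟩
  have hlow : ∀ u ∈ insert v (G.neighborFinset v), G.degree v ≤ G.degree u := by
    refine fun u hu ↦ (mem_insert.mp hu).elim (fun h ↦ h ▸ le_rfl) fun hu ↦ hmin u ?_
    exact mem_filter.mpr ⟨mem_univ _,
      (G.degree_pos_iff_exists_adj u).mpr ⟨v, ((G.mem_neighborFinset _ _).mp hu).symm⟩⟩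
  calc G.degree v * (G.degree v + 1)
      = #(insert v (G.neighborFinset v)) • G.degree v := by
        rw [card_insert_of_notMem (G.notMem_neighborFinset_self v), card_neighborFinset_eq_degree,
          smul_eq_mul, mul_comm]
    _ ≤ ∑ u ∈ insert v (G.neighborFinset v), G.degree u := card_nsmul_le_sum _ _ _ hlow
    _ ≤ ∑ u, G.degree u := sum_le_univ_sum_of_nonneg fun _ ↦ Nat.zero_le _
    _ = 2 * #G.edgeFinset := G.sum_degrees_eq_twice_card_edges

variable (G) in
def HasCliqueBound (k : ℕ) : Prop :=
  (k : ℤ) * #{s : Finset V | G.IsClique (s : Set V)} ≤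
    k * (Fintype.card V + 1) + cliqueBound k #G.edgeFinset

variable (G) in
theorem hasCliqueBound_zero : HasCliqueBound G 0 := by
  simp [HasCliqueBound, cliqueBound]

theorem HasCliqueBound.of_deleteIncidenceSet {k : ℕ} {v : V} (hv : G.degree v ≤ k)
    (h : HasCliqueBound (G.deleteIncidenceSet v) k) : HasCliqueBound G k := by
  have hdel : (#{s : Finset V | G.IsClique (s : Set V)} : ℤ) ≤
      #{s : Finset V | (G.deleteIncidenceSet v).IsClique (s : Set V)} + (2 ^ G.degree v - 1) := by
    have := card_cliques_le_deleteIncidenceSet G v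
    rw [← Nat.cast_le (α := ℤ), Nat.cast_add, Nat.cast_sub Nat.one_le_two_pow] at this
    exact_mod_cast this
  have hE : #G.edgeFinset = #(G.deleteIncidenceSet v).edgeFinset + G.degree v := by
    rw [card_edgeFinset_deleteIncidenceSet, Nat.sub_add_cancel (G.degree_le_card_edgeFinset v)]
  unfold HasCliqueBound at *
  rw [hE]
  linear_combination h + cliqueBound_add_le _ hv + (k : ℤ) * hdel

theorem HasCliqueBound.succ {k : ℕ} (hk : 0 < k) (hm : (k + 1).choose 2 ≤ #G.edgeFinset)
    (h : HasCliqueBound G k) : HasCliqueBound G (k + 1) := by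
  unfold HasCliqueBound at *
  refine le_of_mul_le_mul_left ?_ (by exact_mod_cast hk : (0 : ℤ) < k)
  push_cast
  linear_combination ((k : ℤ) + 1) * h + succ_mul_cliqueBound_le hm

variable (G) in
theorem hasCliqueBound_of_lt_choose {k : ℕ} (hlow : k.choose 2 ≤ #G.edgeFinset)
    (hup : #G.edgeFinset < (k + 1).choose 2) : HasCliqueBound G k := by
  induction hm : #G.edgeFinset using Nat.strong_induction_on generalizing k G with
  | _ m ih =>
  subst hm
  rcases eq_or_ne G ⊥ with hG | hG
  · have h0 : #G.edgeFinset = 0 := card_eq_zero.mpr (edgeFinset_eq_empty.mpr hG)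
    obtain rfl : k = 1 := by
      rw [h0] at hlow hup
      rcases k with _ | _ | k
      · simp at hup
      · rfl
      · exact absurd hlow (Nat.choose_pos (by omega)).not_ge
    have := card_cliques_le_of_eq_bot hG
    unfold HasCliqueBound cliqueBound
    rw [h0]
    norm_num
    exact_mod_cast this
  obtain ⟨v, hpos, hδ⟩ := exists_degree_pos_mul_succ_le hG
  have hE := card_edgeFinset_deleteIncidenceSet G v
  have hδk : G.degree v + 1 ≤ k := by
    by_contra! h
    have := Nat.choose_two_mul_two (k + 1)
    rw [Nat.add_sub_cancel] at this
    nlinarith [Nat.mul_le_mul h h.le]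
  have hδm := G.degree_le_card_edgeFinset v
  rcases le_or_gt (k.choose 2) (#G.edgeFinset - G.degree v) with hk | hk
  · exact .of_deleteIncidenceSet (v := v) (by omega) (ih _ (by omega) _ (by omega) (by omega) hE)
  obtain ⟨j, rfl⟩ : ∃ j, k = j + 1 := ⟨k - 1, by omega⟩
  have hj := Nat.choose_two_succ j
  refine .succ (by omega) hlow (.of_deleteIncidenceSet (v := v) (by omega) ?_)
  exact ih _ (by omega) _ (by omega) (by omega) hE

theorem IsDegenerate.hasCliqueBound {d : ℕ} (hdeg : IsDegenerate G d)
    (hm : d.choose 2 ≤ #G.edgeFinset) : HasCliqueBound G d := by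
  induction hE : #G.edgeFinset using Nat.strong_induction_on generalizing G with
  | _ m ih =>
  subst hE
  obtain rfl | hd := d.eq_zero_or_pos
  · exact hasCliqueBound_zero G
  rcases lt_or_ge #G.edgeFinset ((d + 1).choose 2) with hlt | hge
  · exact hasCliqueBound_of_lt_choose G hm hlt
  have hG : G ≠ ⊥ := fun h ↦ by
    have := Nat.choose_pos (n := d + 1) (k := 2) (by omega)
    rw [card_eq_zero.mpr (edgeFinset_eq_empty.mpr h)] at hge
    omega
  obtain ⟨v, hpos, hvd⟩ := hdeg.exists_degree_pos_le hG
  have hE := card_edgeFinset_deleteIncidenceSet G v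
  have hd' := Nat.choose_two_succ d
  refine .of_deleteIncidenceSet hvd (ih _ ?_ (hdeg.anti (G.deleteIncidenceSet_le v)) ?_ rfl)
  · omega
  · omega

end

theorem clique_count_degenerate_edges_general {V : Type*} [Fintype V]
    (G : SimpleGraph V) (d : ℕ) (hdeg : IsDegenerate G d)
    (hm : d.choose 2 ≤ Nat.card G.edgeSet) :
    2 * d * (cliqueCount G : ℤ) ≤
      2 * d * Fintype.card V + 2 * (2 ^ d - 1) * Nat.card G.edgeSet -
        d * (((d : ℤ) - 3) * 2 ^ d + d + 1) := by
  classical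
  rw [Nat.card_eq_fintype_card, ← edgeFinset_card] at hm ⊢
  have hbound := hdeg.hasCliqueBound hm
  have hchoose : (d.choose 2 : ℤ) * 2 = d * (d - 1) := by
    rcases d with _ | d
    · simp
    · have h := congrArg (Nat.cast (R := ℤ)) (Nat.choose_two_mul_two (d + 1))
      push_cast [Nat.add_sub_cancel] at h
      rw [h]
      push_cast
      ring
  unfold HasCliqueBound cliqueBound at hbound
  rw [cliqueCount_eq_card]
  linear_combination 2 * hbound - (2 ^ d - 1) * hchoose

/-- Every `d`-degenerate graph (`d ≥ 1`) with `n` vertices and `m ≥ C(d,2)`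
edges has at most `n + (2^d - 1)·m/d - ((d - 3)·2^d + d + 1)/2` cliques. -/
theorem clique_count_degenerate_edges {V : Type*} [Fintype V]
    (G : SimpleGraph V) (d : ℕ) (hd : 1 ≤ d) (hdeg : IsDegenerate G d)
    (hm : d.choose 2 ≤ Nat.card G.edgeSet) :
    2 * d * (cliqueCount G : ℤ) ≤
      2 * d * Fintype.card V + 2 * (2 ^ d - 1) * Nat.card G.edgeSet -
        d * (((d : ℤ) - 3) * 2 ^ d + d + 1) :=
  clique_count_degenerate_edges_general G d hdeg hm
end

section
/- Let k ≥ 1 and 0 ≤ ℓ ≤ k be integers. Every finite simple graph G with n ≥ ℓ vertices containing no clique of cardinality k + 1 has at most C(k,ℓ)·(n/k)^ℓ cliques of cardinality ℓ; that is, c_ℓ(G) ≤ C(k,ℓ)·(n/k)^ℓ as real numbers, equivalently k^ℓ·c_ℓ(G) ≤ C(k,ℓ)·n^ℓ. -/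
noncomputable def cliqueCountOf {V : Type*} (G : SimpleGraph V) (ℓ : ℕ) : ℕ :=
  Nat.card {s : Finset V // G.IsNClique ℓ s}

/-!
Induction on `k`, over vertex sets `A` on which `G` has no `(k + 1)`-clique. Let `v ∈ A` have the
most neighbours in `A`, say `d`, and let `A'` be the set of them; `A'` has no `k`-clique since `v`
is adjacent to all of it. An `ℓ`-clique in `A` either lies in `A'`, or contains some `b ∈ A \ A'`
and is then `b` together with an `(ℓ - 1)`-clique among the at most `d` neighbours of `b` in `A`,
which again have no `k`-clique. Bounding both counts by induction gives
`C(k-1,ℓ) (d/(k-1))^ℓ + (n - d) C(k-1,ℓ-1) (d/(k-1))^(ℓ-1)`, and this is at most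
`C(k,ℓ) (n/k)^ℓ` by the tangent-line inequality `y^ℓ ≥ x^ℓ + ℓ x^(ℓ-1) (y - x)` at `x = k d`,
`y = (k - 1) n`.
-/

open Finset

theorem choose_pow_recurrence_le (t r : ℕ) {d n : ℝ} (hd : 0 ≤ d) (hn : 0 ≤ n) :
    ((t : ℝ) + 1) ^ (r + 1) *
        (t.choose (r + 1) * d ^ (r + 1) + t * (n - d) * t.choose r * d ^ r) ≤
      (t : ℝ) ^ (r + 1) * (t + 1).choose (r + 1) * n ^ (r + 1) := by
  rcases lt_or_ge t r with htr | hrt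
  · simp [Nat.choose_eq_zero_of_lt htr, Nat.choose_eq_zero_of_lt (htr.trans r.lt_succ_self)]
    positivity
  have hchoose : ((r : ℝ) + 1) * t.choose (r + 1) = (t - r) * t.choose r := by
    have := Nat.choose_succ_right_eq t r
    rw [← Nat.cast_sub hrt]
    exact_mod_cast by linarith
  have hchoose_succ : ((r : ℝ) + 1) * (t + 1).choose (r + 1) = (t + 1) * t.choose r := by
    exact_mod_cast by linarith [Nat.add_one_mul_choose_eq t r]
  set a : ℝ := (t + 1) * d
  set m : ℝ := t * n
  have htangent : a ^ (r + 1) + (r + 1 : ℕ) * a ^ r * (m - a) ≤ m ^ (r + 1) := by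
    simpa using pow_add_mul_le_add_pow (a := a) (b := m - a) (by positivity)
      (by linarith [show 0 ≤ a by positivity, show 0 ≤ m by positivity]) (r + 1)
  rw [← mul_le_mul_iff_right₀ (by positivity : (0 : ℝ) < r + 1)]
  calc _ = (t + 1) * t.choose r * (a ^ (r + 1) + (r + 1 : ℕ) * a ^ r * (m - a)) := by
          simp only [a, mul_pow]
          push_cast
          linear_combination ((t + 1 : ℝ) ^ (r + 1) * d ^ (r + 1)) * hchoose
    _ ≤ (t + 1) * t.choose r * m ^ (r + 1) := by gcongr
    _ = _ := by linear_combination ((t : ℝ) ^ (r + 1) * n ^ (r + 1)) * hchoose_succ.symm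

namespace SimpleGraph

theorem CliqueFreeOn.filter_adj {V : Type*} {G : SimpleGraph V} [DecidableRel G.Adj]
    {A : Finset V} {n : ℕ} {b : V} (hA : G.CliqueFreeOn A (n + 1)) (hb : b ∈ A) :
    G.CliqueFreeOn ↑{u ∈ A | G.Adj b u} n := by
  convert hA.of_succ G hb using 1
  ext
  simp

variable {V : Type*} [DecidableEq V] (G : SimpleGraph V) [DecidableRel G.Adj]

def cliqueFinsetOn (A : Finset V) (n : ℕ) : Finset (Finset V) :=
  {S ∈ A.powersetCard n | G.IsClique (S : Set V)}

variable {G}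

theorem mem_cliqueFinsetOn {A S : Finset V} {n : ℕ} :
    S ∈ G.cliqueFinsetOn A n ↔ S ⊆ A ∧ G.IsNClique n S := by
  simp [cliqueFinsetOn, isNClique_iff, and_assoc, and_comm (a := G.IsClique _)]

theorem cliqueFinsetOn_eq_empty {A : Finset V} {n : ℕ} (hA : G.CliqueFreeOn A n) :
    G.cliqueFinsetOn A n = ∅ :=
  eq_empty_of_forall_notMem fun _ hS ↦
    hA (coe_subset.2 (mem_cliqueFinsetOn.1 hS).1) (mem_cliqueFinsetOn.1 hS).2

theorem cliqueFinsetOn_zero (A : Finset V) : G.cliqueFinsetOn A 0 = {∅} := by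
  simp [cliqueFinsetOn]

theorem cliqueFinsetOn_empty (n : ℕ) : G.cliqueFinsetOn ∅ (n + 1) = ∅ := by
  simp [cliqueFinsetOn]

theorem card_cliqueFinsetOn_one (A : Finset V) : #(G.cliqueFinsetOn A 1) = #A := by
  rw [cliqueFinsetOn, filter_true_of_mem, card_powersetCard, Nat.choose_one_right]
  intro S hS
  obtain ⟨v, rfl⟩ := card_eq_one.1 (mem_powersetCard.1 hS).2
  simp

variable (G)

theorem card_cliqueFinsetOn_succ_le (A A' : Finset V) (n : ℕ) :
    #(G.cliqueFinsetOn A (n + 1)) ≤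
      #(G.cliqueFinsetOn A' (n + 1)) +
        ∑ b ∈ A \ A', #(G.cliqueFinsetOn {u ∈ A | G.Adj b u} n) := by
  have hcover : G.cliqueFinsetOn A (n + 1) ⊆ G.cliqueFinsetOn A' (n + 1) ∪
      (A \ A').biUnion fun b ↦ (G.cliqueFinsetOn {u ∈ A | G.Adj b u} n).image (insert b) := by
    intro S hS
    obtain ⟨hSA, hS⟩ := mem_cliqueFinsetOn.1 hS
    by_cases hSA' : S ⊆ A'
    · exact mem_union_left _ (mem_cliqueFinsetOn.2 ⟨hSA', hS⟩)
    obtain ⟨b, hbS, hbA'⟩ := not_subset.1 hSA'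
    refine mem_union_right _ (mem_biUnion.2 ⟨b, mem_sdiff.2 ⟨hSA hbS, hbA'⟩, mem_image.2
      ⟨S.erase b, mem_cliqueFinsetOn.2 ⟨fun u hu ↦ ?_, hS.erase_of_mem hbS⟩, insert_erase hbS⟩⟩)
    obtain ⟨hub, huS⟩ := mem_erase.1 hu
    exact mem_filter.2 ⟨hSA huS, hS.isClique hbS huS hub.symm⟩
  calc _ ≤ _ := card_le_card hcover
    _ ≤ _ := card_union_le _ _
    _ ≤ _ := add_le_add_right (card_biUnion_le.trans (sum_le_sum fun _ _ ↦ card_image_le)) _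

theorem cliqueCountOf_eq_card_cliqueFinsetOn [Fintype V] (n : ℕ) :
    cliqueCountOf G n = #(G.cliqueFinsetOn univ n) := by
  rw [cliqueCountOf, ← Nat.card_eq_finsetCard]
  exact Nat.card_congr (Equiv.subtypeEquivRight fun _ ↦ by simp [mem_cliqueFinsetOn])

theorem pow_mul_card_cliqueFinsetOn_succ_le_of_le {A A' : Finset V} {t r x y : ℕ}
    (hin : t ^ (r + 1) * #(G.cliqueFinsetOn A' (r + 1)) ≤ x)
    (hout : ∀ b ∈ A \ A', t ^ r * #(G.cliqueFinsetOn {u ∈ A | G.Adj b u} r) ≤ y) :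
    t ^ (r + 1) * #(G.cliqueFinsetOn A (r + 1)) ≤ x + t * (#(A \ A') * y) :=
  calc _ ≤ t ^ (r + 1) * (#(G.cliqueFinsetOn A' (r + 1)) +
        ∑ b ∈ A \ A', #(G.cliqueFinsetOn {u ∈ A | G.Adj b u} r)) :=
        Nat.mul_le_mul_left _ (card_cliqueFinsetOn_succ_le G A A' r)
    _ = t ^ (r + 1) * #(G.cliqueFinsetOn A' (r + 1)) +
        t * ∑ b ∈ A \ A', t ^ r * #(G.cliqueFinsetOn {u ∈ A | G.Adj b u} r) := by
        simp only [mul_add, pow_succ', mul_assoc, mul_sum]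
    _ ≤ _ := by
        refine add_le_add hin (Nat.mul_le_mul_left t ?_)
        rw [← smul_eq_mul, ← sum_const]
        exact sum_le_sum hout

theorem pow_mul_card_cliqueFinsetOn_succ_le {t : ℕ} (ht : 0 < t) {A : Finset V}
    (ih : ∀ s (B : Finset V), G.CliqueFreeOn B (t + 1) →
      t ^ s * #(G.cliqueFinsetOn B s) ≤ t.choose s * #B ^ s)
    (hA : G.CliqueFreeOn A (t + 2)) (r : ℕ) :
    (t + 1) ^ (r + 1) * #(G.cliqueFinsetOn A (r + 1)) ≤
      (t + 1).choose (r + 1) * #A ^ (r + 1) := by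
  rcases A.eq_empty_or_nonempty with rfl | hA_ne
  · simp [cliqueFinsetOn_empty]
  obtain ⟨v, hv, hv_max⟩ := exists_max_image A (fun b ↦ #{u ∈ A | G.Adj b u}) hA_ne
  set A' := {u ∈ A | G.Adj v u}
  have hA'_sub : A' ⊆ A := filter_subset _ A
  have hcount := pow_mul_card_cliqueFinsetOn_succ_le_of_le G (ih (r + 1) A' (hA.filter_adj hv))
    fun b hb ↦ (ih r _ (hA.filter_adj (mem_sdiff.1 hb).1)).trans
      (Nat.mul_le_mul_left _ (Nat.pow_le_pow_left (hv_max b (mem_sdiff.1 hb).1) r))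
  have hcount_real : (t : ℝ) ^ (r + 1) * #(G.cliqueFinsetOn A (r + 1)) ≤
      t.choose (r + 1) * (#A' : ℝ) ^ (r + 1) + t * (#A - #A') * t.choose r * (#A' : ℝ) ^ r := by
    rw [card_sdiff_of_subset hA'_sub] at hcount
    have := (Nat.cast_le (α := ℝ)).2 hcount
    push_cast [Nat.cast_sub (card_le_card hA'_sub)] at this
    linarith
  have htpow : (0 : ℝ) < t ^ (r + 1) := by positivity
  refine Nat.cast_le.1 (le_of_mul_le_mul_left (α := ℝ) ?_ htpow)
  push_cast
  calc _ = ((t : ℝ) + 1) ^ (r + 1) * ((t : ℝ) ^ (r + 1) * #(G.cliqueFinsetOn A (r + 1))) := by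
        ring
    _ ≤ ((t : ℝ) + 1) ^ (r + 1) * (t.choose (r + 1) * (#A' : ℝ) ^ (r + 1) +
          t * (#A - #A') * t.choose r * (#A' : ℝ) ^ r) := by gcongr
    _ ≤ _ := (choose_pow_recurrence_le t r (by positivity) (by positivity)).trans_eq (by ring)

theorem pow_mul_card_cliqueFinsetOn_le :
    ∀ (t s : ℕ) (A : Finset V), G.CliqueFreeOn A (t + 1) →
      t ^ s * #(G.cliqueFinsetOn A s) ≤ t.choose s * #A ^ s
  | _, 0, _, _ => by simp [cliqueFinsetOn_zero]
  | 0, _ + 1, _, _ => by simp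
  -- The step divides by `t ^ s`, so `t = 1` (no edges in `A`) is a base case.
  | 1, 1, _, _ => by simp [card_cliqueFinsetOn_one]
  | 1, r + 2, _, hA => by simp [cliqueFinsetOn_eq_empty (hA.mono G (by omega : 2 ≤ r + 2))]
  | t + 2, r + 1, A, hA => pow_mul_card_cliqueFinsetOn_succ_le G (by omega)
      (fun s B hB ↦ pow_mul_card_cliqueFinsetOn_le (t + 1) s B hB) hA r

end SimpleGraph

theorem zykov_general {V : Type*} [Fintype V] (G : SimpleGraph V) (k ℓ : ℕ)
    (hfree : G.CliqueFree (k + 1)) :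
    k ^ ℓ * cliqueCountOf G ℓ ≤ k.choose ℓ * Fintype.card V ^ ℓ := by
  classical
  rw [SimpleGraph.cliqueCountOf_eq_card_cliqueFinsetOn, ← card_univ]
  exact SimpleGraph.pow_mul_card_cliqueFinsetOn_le G k ℓ univ hfree.cliqueFreeOn

/-- Every graph with `n ≥ ℓ` vertices and no clique of cardinality `k + 1`
(where `k ≥ 1`, `0 ≤ ℓ ≤ k`) has at most `C(k,ℓ)·(n/k)^ℓ` cliques of
cardinality `ℓ`. -/
theorem zykov {V : Type*} [Fintype V] (G : SimpleGraph V) (k ℓ : ℕ)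
    (hk : 1 ≤ k) (hℓ : ℓ ≤ k) (hn : ℓ ≤ Fintype.card V)
    (hfree : G.CliqueFree (k + 1)) :
    k ^ ℓ * cliqueCountOf G ℓ ≤ k.choose ℓ * Fintype.card V ^ ℓ :=
  zykov_general G k ℓ hfree
end
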